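/- arXiv:1408.4419 — 8 statements merged into one kernel-verified Lean document; each statement's English description precedes it below -/
import Mathlib

section
/- Let ρ > 0, let (η_j) be a summable sequence of nonnegative reals, and let (U_j) be bounded self-adjoint operators on H with U_j ⪰ ρI and (1+η_k)U_k ⪰ U_{k+1} for all k. Let (T_k) be maps H → H, each α_k-averaged in ‖·‖_{U_k} with α_k ∈ (0,1), let λ_k ∈ (0, 1/α_k], and suppose z* is a common fixed point of all T_k. Define z^{k+1} = (1−λ_k)z^k + λ_k T_k z^k. Then for all k, ‖z^{k+1} − z*‖²_{U_{k+1}} ≤ (1+η_k)‖z^k − z*‖²_{U_k}, and hence ‖z^k − z*‖²_{U_k} ≤ η_p ‖z^0 − z*‖²_{U_0} where η_p = ∏_{i=0}^∞(1+η_i). -/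
/-!
Since `N z* = z*`, the relaxed step is the convex combination
`z^{k+1} - z* = (1 - λα)(z^k - z*) + λα (N z^k - N z*)` with `λα ∈ (0, 1]`, and by the identity
`‖(1-t)a + tb‖²_U = (1-t)‖a‖²_U + t‖b‖²_U - t(1-t)‖a-b‖²_U` together with nonexpansiveness of `N`
it does not increase the `U_k`-distance to `z*`. Passing from `U_k` to `U_{k+1}` costs a factor
`1 + η_k`, and the partial products of `∏ (1 + η_i)` increase to the infinite product, which
exists because `η` is summable.
-/

open RealInnerProductSpace Finset

lemma prod_range_one_add_le_tprod {η : ℕ → ℝ} (hη : ∀ i, 0 ≤ η i) (hsum : Summable η) (n : ℕ) :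
    ∏ i ∈ range n, (1 + η i) ≤ ∏' i, (1 + η i) := by
  have hmono : Monotone fun n ↦ ∏ i ∈ range n, (1 + η i) := by
    refine monotone_nat_of_le_succ fun n ↦ ?_
    rw [prod_range_succ]
    exact le_mul_of_one_le_right (prod_nonneg fun i _ ↦ by linarith [hη i]) (by linarith [hη n])
  exact hmono.ge_of_tendsto (Real.multipliable_one_add_of_summable hsum).hasProd.tendsto_prod_nat n

lemma le_prod_range_mul_of_le_mul {e c : ℕ → ℝ} (hc : ∀ k, 0 ≤ c k)
    (h : ∀ k, e (k + 1) ≤ c k * e k) (n : ℕ) : e n ≤ (∏ i ∈ range n, c i) * e 0 := by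
  induction n with
  | zero => simp
  | succ n ih =>
    calc e (n + 1) ≤ c n * e n := h n
      _ ≤ c n * ((∏ i ∈ range n, c i) * e 0) := mul_le_mul_of_nonneg_left ih (hc n)
      _ = (∏ i ∈ range (n + 1), c i) * e 0 := by rw [prod_range_succ]; ring

section

variable {H : Type*} [NormedAddCommGroup H] [InnerProductSpace ℝ H]

lemma LinearMap.IsSymmetric.inner_convex_combo_self {T : H →ₗ[ℝ] H} (hT : T.IsSymmetric)
    (a b : H) (t : ℝ) :
    ⟪T ((1 - t) • a + t • b), (1 - t) • a + t • b⟫ =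
      (1 - t) * ⟪T a, a⟫ + t * ⟪T b, b⟫ - t * (1 - t) * ⟪T (a - b), a - b⟫ := by
  have hba : ⟪T b, a⟫ = ⟪T a, b⟫ := (hT b a).trans (real_inner_comm _ _)
  simp only [map_add, map_sub, map_smul, inner_add_left, inner_add_right, inner_sub_left,
    inner_sub_right, real_inner_smul_left, real_inner_smul_right, hba]
  ring

namespace ContinuousLinearMap

variable {U : H →L[ℝ] H}

lemma IsPositive.inner_convex_combo_self_le (hU : U.IsPositive) {a b : H}
    (hba : ⟪U b, b⟫ ≤ ⟪U a, a⟫) {t : ℝ} (ht0 : 0 ≤ t) (ht1 : t ≤ 1) :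
    ⟪U ((1 - t) • a + t • b), (1 - t) • a + t • b⟫ ≤ ⟪U a, a⟫ := by
  have hcombo := hU.isSymmetric.inner_convex_combo_self a b t
  rw [coe_coe] at hcombo
  rw [hcombo]
  nlinarith [mul_nonneg (mul_nonneg ht0 (sub_nonneg.2 ht1)) (hU.inner_nonneg_left (a - b))]

lemma IsPositive.inner_relaxed_averaged_step_le (hU : U.IsPositive) {N : H → H}
    (hN : ∀ x y, ⟪U (N x - N y), N x - N y⟫ ≤ ⟪U (x - y), x - y⟫) {α lam : ℝ} (hα : 0 < α)
    (hlam0 : 0 ≤ lam) (hlam : lam ≤ 1 / α) {p : H} (hp : (1 - α) • p + α • N p = p) (x : H) :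
    ⟪U ((1 - lam) • x + lam • ((1 - α) • x + α • N x) - p),
        (1 - lam) • x + lam • ((1 - α) • x + α • N x) - p⟫ ≤ ⟪U (x - p), x - p⟫ := by
  have hNp : N p = p := by
    refine smul_right_injective H hα.ne' ?_
    simpa only [sub_smul, one_smul, sub_add_eq_add_sub, sub_eq_iff_eq_add, add_right_inj] using hp
  have hstep : (1 - lam) • x + lam • ((1 - α) • x + α • N x) - p =
      (1 - lam * α) • (x - p) + (lam * α) • (N x - N p) := by
    rw [hNp]
    simp only [smul_add, smul_sub, sub_smul, smul_smul, one_smul]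
    abel
  rw [hstep]
  refine hU.inner_convex_combo_self_le (hN x p) (by positivity) ?_
  rwa [le_div_iff₀ hα] at hlam

end ContinuousLinearMap

end

/-- Variable metric KM iteration: quasi-Fejér monotonicity in the changing metrics, and
the resulting uniform bound `‖z^k - z*‖²_{U_k} ≤ η_p ‖z^0 - z*‖²_{U_0}`. -/
theorem variable_metric_KM_fejer {H : Type*} [NormedAddCommGroup H] [InnerProductSpace ℝ H]
    [CompleteSpace H] (ρ : ℝ) (hρ : 0 < ρ)
    (η : ℕ → ℝ) (hηpos : ∀ n, 0 ≤ η n) (hηsum : Summable η)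
    (U : ℕ → H →L[ℝ] H) (hUsa : ∀ k, IsSelfAdjoint (U k))
    (hUρ : ∀ k (x : H), ρ * ‖x‖ ^ 2 ≤ ⟪U k x, x⟫)
    (hUdec : ∀ k (x : H), ⟪U (k + 1) x, x⟫ ≤ (1 + η k) * ⟪U k x, x⟫)
    (α : ℕ → ℝ) (hα : ∀ k, α k ∈ Set.Ioo (0 : ℝ) 1)
    (lam : ℕ → ℝ) (hlam : ∀ k, lam k ∈ Set.Ioc (0 : ℝ) (1 / α k))
    (T : ℕ → H → H)
    (hTavg : ∀ k, ∃ N : H → H,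
        (∀ x y : H, ⟪U k (N x - N y), N x - N y⟫ ≤ ⟪U k (x - y), x - y⟫) ∧
        ∀ x : H, T k x = (1 - α k) • x + α k • N x)
    (zs : H) (hfix : ∀ k, T k zs = zs)
    (z : ℕ → H) (hrec : ∀ k, z (k + 1) = (1 - lam k) • z k + lam k • T k (z k)) :
    (∀ k, ⟪U (k + 1) (z (k + 1) - zs), z (k + 1) - zs⟫ ≤
        (1 + η k) * ⟪U k (z k - zs), z k - zs⟫) ∧
    (∀ k, ⟪U k (z k - zs), z k - zs⟫ ≤
        (∏' i, (1 + η i)) * ⟪U 0 (z 0 - zs), z 0 - zs⟫) := by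
  have hUpos (k : ℕ) : (U k).IsPositive :=
    (ContinuousLinearMap.isPositive_iff' _).2
      ⟨hUsa k, fun x ↦ (by positivity : 0 ≤ ρ * ‖x‖ ^ 2).trans (hUρ k x)⟩
  have hfejer (k : ℕ) : ⟪U (k + 1) (z (k + 1) - zs), z (k + 1) - zs⟫ ≤
      (1 + η k) * ⟪U k (z k - zs), z k - zs⟫ := by
    obtain ⟨N, hN, hT⟩ := hTavg k
    have hstep := (hUpos k).inner_relaxed_averaged_step_le hN (hα k).1 (hlam k).1.le (hlam k).2
      ((hT zs).symm.trans (hfix k)) (z k)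
    rw [← hT, ← hrec] at hstep
    exact (hUdec k _).trans (mul_le_mul_of_nonneg_left hstep (by linarith [hηpos k]))
  refine ⟨hfejer, fun k ↦ ?_⟩
  calc ⟪U k (z k - zs), z k - zs⟫
      ≤ (∏ i ∈ range k, (1 + η i)) * ⟪U 0 (z 0 - zs), z 0 - zs⟫ :=
        le_prod_range_mul_of_le_mul (e := fun k ↦ ⟪U k (z k - zs), z k - zs⟫)
          (fun i ↦ by linarith [hηpos i]) hfejer k
    _ ≤ (∏' i, (1 + η i)) * ⟪U 0 (z 0 - zs), z 0 - zs⟫ :=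
        mul_le_mul_of_nonneg_right (prod_range_one_add_le_tprod hηpos hηsum k)
          ((hUpos 0).inner_nonneg_left _)
end

section
/- Under the hypotheses of the variable-metric KM iteration (z^{k+1} = (1−λ_k)z^k + λ_k T_k z^k with T_k α_k-averaged in ‖·‖_{U_k}, (1+η_k)U_k ⪰ U_{k+1}, U_k ⪰ ρI, common fixed point z*), the sum ∑_{i=0}^∞ ((1−α_iλ_i)/(α_iλ_i)) ‖z^{i+1} − z^i‖² is bounded by (1/ρ)(1 + η_p η_s)‖z^0 − z*‖²_{U_0}, where η_p = ∏(1+η_i) and η_s = ∑ η_i. -/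
/-!
Write `μₖ = αₖλₖ ∈ (0, 1]` and `Tₖ = (1 - αₖ) I + αₖ Nₖ`; then `zᵏ⁺¹ = (1 - μₖ) zᵏ + μₖ Nₖ zᵏ`.
The identity `‖(1 - μ) a + μ b‖² = (1 - μ) ‖a‖² + μ ‖b‖² - μ (1 - μ) ‖a - b‖²` in the `Uₖ`-norm,
together with `‖Nₖ zᵏ - z*‖_{Uₖ} ≤ ‖zᵏ - z*‖_{Uₖ}`, gives the Fejér-type descent
`‖zᵏ⁺¹ - z*‖²_{Uₖ} + ((1 - μₖ)/μₖ) ‖zᵏ⁺¹ - zᵏ‖²_{Uₖ} ≤ ‖zᵏ - z*‖²_{Uₖ}`.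
Passing from `Uₖ` to `Uₖ₊₁` costs a factor `1 + ηₖ`, so `Vₖ = ‖zᵏ - z*‖²_{Uₖ}` stays below
`η_p V₀`, and telescoping the descent bounds the weighted sum by `V₀ + η_p η_s V₀`;
finally `Uₖ ⪰ ρ I` converts `‖·‖²_{Uₖ}` into `ρ ‖·‖²`.
-/

open RealInnerProductSpace Finset

lemma prod_range_le_tprod_of_one_le {f : ℕ → ℝ} (hf : ∀ i, 1 ≤ f i) (hm : Multipliable f)
    (n : ℕ) : ∏ i ∈ range n, f i ≤ ∏' i, f i := by
  have hmono : Monotone fun n ↦ ∏ i ∈ range n, f i := fun _ _ hmn ↦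
    prod_le_prod_of_subset_of_one_le (range_mono hmn)
      (fun i _ ↦ zero_le_one.trans (hf i)) (fun i _ _ ↦ hf i)
  exact hmono.ge_of_tendsto hm.hasProd.tendsto_prod_nat n

section QuasiFejer

variable {e V W η : ℕ → ℝ}

lemma le_prod_range_one_add_mul (hη : ∀ n, 0 ≤ η n) (h : ∀ n, V (n + 1) ≤ (1 + η n) * V n)
    (n : ℕ) : V n ≤ (∏ i ∈ range n, (1 + η i)) * V 0 := by
  induction n with
  | zero => simp
  | succ n ih =>
    calc V (n + 1) ≤ (1 + η n) * V n := h n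
      _ ≤ (1 + η n) * ((∏ i ∈ range n, (1 + η i)) * V 0) := by
        gcongr
        linarith [hη n]
      _ = (∏ i ∈ range (n + 1), (1 + η i)) * V 0 := by rw [prod_range_succ]; ring

lemma sum_range_add_le_add_sum_mul (h : ∀ n, e n + V (n + 1) ≤ (1 + η n) * V n) (n : ℕ) :
    ∑ i ∈ range n, e i + V n ≤ V 0 + ∑ i ∈ range n, η i * V i := by
  induction n with
  | zero => simp
  | succ n ih =>
    rw [sum_range_succ, sum_range_succ]
    linarith [h n]

theorem sum_range_le_of_add_le_of_le_one_add_mul (he : ∀ n, 0 ≤ e n) (hV : ∀ n, 0 ≤ V n)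
    (hη : ∀ n, 0 ≤ η n) (hηs : Summable η) (hW : ∀ n, e n + W n ≤ V n)
    (hVW : ∀ n, V (n + 1) ≤ (1 + η n) * W n) (n : ℕ) :
    ∑ i ∈ range n, e i ≤ (1 + (∏' i, (1 + η i)) * ∑' i, η i) * V 0 := by
  have h : ∀ n, e n + V (n + 1) ≤ (1 + η n) * V n := fun n ↦ by
    linear_combination mul_le_mul_of_nonneg_left (hW n) (by linarith [hη n] : 0 ≤ 1 + η n) +
      hVW n + mul_nonneg (hη n) (he n)
  set ηp := ∏' i, (1 + η i)
  have hprod : ∀ i, ∏ j ∈ range i, (1 + η j) ≤ ηp :=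
    prod_range_le_tprod_of_one_le (fun j ↦ by linarith [hη j])
      (Real.multipliable_one_add_of_summable hηs)
  have hηp : 0 ≤ ηp := zero_le_one.trans (by simpa using hprod 0)
  have hV_le : ∀ i, V i ≤ ηp * V 0 := fun i ↦
    calc V i ≤ (∏ j ∈ range i, (1 + η j)) * V 0 :=
          le_prod_range_one_add_mul hη (fun k ↦ by linarith [h k, he k]) i
      _ ≤ ηp * V 0 := by gcongr; exacts [hV 0, hprod i]
  calc ∑ i ∈ range n, e i
      ≤ V 0 + ∑ i ∈ range n, η i * V i := by
        linarith [sum_range_add_le_add_sum_mul h n, hV n]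
    _ ≤ V 0 + ∑ i ∈ range n, η i * (ηp * V 0) := by
        gcongr with i
        exacts [hη i, hV_le i]
    _ = V 0 + ηp * V 0 * ∑ i ∈ range n, η i := by rw [← sum_mul]; ring
    _ ≤ V 0 + ηp * V 0 * ∑' i, η i := by
        gcongr
        · exact mul_nonneg hηp (hV 0)
        · exact hηs.sum_le_tsum _ (fun i _ ↦ hη i)
    _ = (1 + ηp * ∑' i, η i) * V 0 := by ring

end QuasiFejer

namespace LinearMap.IsSymmetric

variable {H : Type*} [NormedAddCommGroup H] [InnerProductSpace ℝ H] {T : H →ₗ[ℝ] H}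

lemma inner_map_one_sub_smul_add_smul (hT : T.IsSymmetric) (a b : H) (μ : ℝ) :
    ⟪T ((1 - μ) • a + μ • b), (1 - μ) • a + μ • b⟫ =
      (1 - μ) * ⟪T a, a⟫ + μ * ⟪T b, b⟫ - μ * (1 - μ) * ⟪T (a - b), a - b⟫ := by
  have hba : ⟪T b, a⟫ = ⟪T a, b⟫ := by rw [hT b a, real_inner_comm]
  simp only [map_add, map_smul, map_sub, inner_add_left, inner_add_right,
    inner_sub_left, inner_sub_right, real_inner_smul_left, real_inner_smul_right, hba]
  ring

lemma inner_map_sub_add_div_mul_le (hT : T.IsSymmetric) {x y p w : H}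
    (hy : ⟪T (y - p), y - p⟫ ≤ ⟪T (x - p), x - p⟫) {μ : ℝ} (hμ : 0 ≤ μ)
    (hw : w = (1 - μ) • x + μ • y) :
    ⟪T (w - p), w - p⟫ + (1 - μ) / μ * ⟪T (w - x), w - x⟫ ≤ ⟪T (x - p), x - p⟫ := by
  have hwp : w - p = (1 - μ) • (x - p) + μ • (y - p) := by rw [hw]; module
  have hwx : ⟪T (w - x), w - x⟫ = μ ^ 2 * ⟪T (x - y), x - y⟫ := by
    rw [show w - x = -μ • (x - y) by rw [hw]; module, map_smul, real_inner_smul_left,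
      real_inner_smul_right]
    ring
  have hcoef : (1 - μ) / μ * μ ^ 2 = μ * (1 - μ) := by
    rcases eq_or_ne μ 0 with rfl | hμ0
    · simp
    · field_simp
  rw [hwp, hT.inner_map_one_sub_smul_add_smul, sub_sub_sub_cancel_right, hwx, ← mul_assoc, hcoef]
  nlinarith [mul_le_mul_of_nonneg_left hy hμ]

lemma mul_norm_sq_add_inner_map_le (hT : T.IsSymmetric) {ρ : ℝ}
    (hρ : ∀ v, ρ * ‖v‖ ^ 2 ≤ ⟪T v, v⟫) {x y p w : H}
    (hy : ⟪T (y - p), y - p⟫ ≤ ⟪T (x - p), x - p⟫) {μ : ℝ} (hμ₀ : 0 ≤ μ) (hμ₁ : μ ≤ 1)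
    (hw : w = (1 - μ) • x + μ • y) :
    ρ * ((1 - μ) / μ * ‖w - x‖ ^ 2) + ⟪T (w - p), w - p⟫ ≤ ⟪T (x - p), x - p⟫ := by
  linear_combination hT.inner_map_sub_add_div_mul_le hy hμ₀ hw +
    mul_le_mul_of_nonneg_left (hρ (w - x)) (div_nonneg (sub_nonneg.2 hμ₁) hμ₀)

end LinearMap.IsSymmetric

/-- Variable metric KM iteration: the weighted sum of successive-iterate distances
`∑ ((1-α_iλ_i)/(α_iλ_i)) ‖z^{i+1} - z^i‖²` is bounded by
`(1/ρ)(1 + η_p η_s)‖z^0 - z*‖²_{U_0}` (stated via partial sums). -/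
theorem variable_metric_KM_FPR_sum {H : Type*} [NormedAddCommGroup H] [InnerProductSpace ℝ H]
    [CompleteSpace H] (ρ : ℝ) (hρ : 0 < ρ)
    (η : ℕ → ℝ) (hηpos : ∀ n, 0 ≤ η n) (hηsum : Summable η)
    (U : ℕ → H →L[ℝ] H) (hUsa : ∀ k, IsSelfAdjoint (U k))
    (hUρ : ∀ k (x : H), ρ * ‖x‖ ^ 2 ≤ ⟪U k x, x⟫)
    (hUdec : ∀ k (x : H), ⟪U (k + 1) x, x⟫ ≤ (1 + η k) * ⟪U k x, x⟫)
    (α : ℕ → ℝ) (hα : ∀ k, α k ∈ Set.Ioo (0 : ℝ) 1)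
    (lam : ℕ → ℝ) (hlam : ∀ k, lam k ∈ Set.Ioc (0 : ℝ) (1 / α k))
    (T : ℕ → H → H)
    (hTavg : ∀ k, ∃ N : H → H,
        (∀ x y : H, ⟪U k (N x - N y), N x - N y⟫ ≤ ⟪U k (x - y), x - y⟫) ∧
        ∀ x : H, T k x = (1 - α k) • x + α k • N x)
    (zs : H) (hfix : ∀ k, T k zs = zs)
    (z : ℕ → H) (hrec : ∀ k, z (k + 1) = (1 - lam k) • z k + lam k • T k (z k)) :
    ∀ n : ℕ,
      ∑ i ∈ Finset.range n,
          ((1 - α i * lam i) / (α i * lam i)) * ‖z (i + 1) - z i‖ ^ 2 ≤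
        (1 / ρ) * (1 + (∏' i, (1 + η i)) * (∑' i, η i)) *
          ⟪U 0 (z 0 - zs), z 0 - zs⟫ := by
  intro n
  have hμ : ∀ k, 0 ≤ α k * lam k ∧ α k * lam k ≤ 1 := fun k ↦
    ⟨(mul_pos (hα k).1 (hlam k).1).le,
      by simpa [(hα k).1.ne'] using mul_le_mul_of_nonneg_left (hlam k).2 (hα k).1.le⟩
  have descent : ∀ k, ρ * ((1 - α k * lam k) / (α k * lam k) * ‖z (k + 1) - z k‖ ^ 2) +
      ⟪U k (z (k + 1) - zs), z (k + 1) - zs⟫ ≤ ⟪U k (z k - zs), z k - zs⟫ := by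
    intro k
    obtain ⟨N, hN, hT⟩ := hTavg k
    have hNzs : N zs = zs := by
      have h := hfix k
      rw [hT] at h
      exact smul_right_injective H (hα k).1.ne' (by linear_combination (norm := module) h)
    have hz : z (k + 1) = (1 - α k * lam k) • z k + (α k * lam k) • N (z k) := by
      rw [hrec, hT]; module
    exact (hUsa k).isSymmetric.mul_norm_sq_add_inner_map_le (hUρ k)
      (by simpa [hNzs] using hN (z k) zs) (hμ k).1 (hμ k).2 hz
  have hsum := sum_range_le_of_add_le_of_le_one_add_mul
    (fun k ↦ mul_nonneg hρ.le (mul_nonneg (div_nonneg (sub_nonneg.2 (hμ k).2) (hμ k).1)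
      (sq_nonneg _)))
    (fun k ↦ (mul_nonneg hρ.le (sq_nonneg _)).trans (hUρ k (z k - zs))) hηpos hηsum descent
    (fun k ↦ hUdec k (z (k + 1) - zs)) n
  rw [← mul_sum] at hsum
  rw [one_div, mul_assoc, inv_mul_eq_div, le_div_iff₀ hρ]
  linarith
end

section
/- Define the pre-primal-dual gap G^pre(x_f, x_g, x_S; x) = f(x_f) + g(x_g) + ⟨S x_S, −x⟩ − f(x) − g(x). Suppose the iteration z^{k+1} = z^k − γ_k λ_k U_k⁻¹(∇̃f(x_f^k) + ∇̃g(x_g^k) + S x_S^k) holds, where ∇̃f(x_f^k) ∈ ∂f(x_f^k) and ∇̃g(x_g^k) ∈ ∂g(x_g^k). Then for all x ∈ H and k: 2γ_kλ_k G^pre(x_f^k, x_g^k, x_S^k; x) ≤ ‖z^k − x‖²_{U_k} − ‖z^{k+1} − x‖²_{U_k} − ‖z^{k+1} − z^k‖²_{U_k} + 2γ_kλ_k⟨x_f^k − z^{k+1}, ∇̃f(x_f^k)⟩ + 2γ_kλ_k⟨x_g^k − z^{k+1}, ∇̃g(x_g^k)⟩ + 2γ_kλ_k⟨−z^{k+1},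 S x_S^k⟩. -/
/-!
Write `w = ∇̃f(x_f^k) + ∇̃g(x_g^k) + S x_S^k`, so that the iteration reads
`U_k (z^k - z^{k+1}) = γ_k λ_k w`. By the three-point identity for the self-adjoint `U_k`, the
three metric terms equal `2 γ_k λ_k ⟨w, z^{k+1} - x⟩`; adding the key terms, the right-hand side is
exactly `2 γ_k λ_k (⟨x_f^k - x, ∇̃f(x_f^k)⟩ + ⟨x_g^k - x, ∇̃g(x_g^k)⟩ + ⟨S x_S^k, -x⟩)`, which
bounds the scaled gap by the two subgradient inequalities at `x`.
-/

open RealInnerProductSpace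

theorem EReal.sub_le_coe_neg_of_add_coe_le {a b : EReal} {r : ℝ} (h : a + r ≤ b) :
    a - b ≤ ((-r : ℝ) : EReal) := by
  refine EReal.sub_le_of_le_add ?_
  calc a = a + r + ((-r : ℝ) : EReal) := by
        rw [add_assoc, ← EReal.coe_add, add_neg_cancel, EReal.coe_zero, add_zero]
    _ ≤ b + ((-r : ℝ) : EReal) := add_le_add_left h _
    _ = ((-r : ℝ) : EReal) + b := add_comm _ _

theorem EReal.add_add_coe_sub_sub_le {a b c d : EReal} {p q : ℝ} (hac : a - c ≤ p)
    (hbd : b - d ≤ q) (s : ℝ) : a + b + s - c - d ≤ ((p + q + s : ℝ) : EReal) := by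
  have hsplit : a + b + s - c - d = (a - c) + (b - d) + s := by
    simp only [sub_eq_add_neg]
    ac_rfl
  rw [hsplit, EReal.coe_add, EReal.coe_add]
  gcongr

section

variable {E : Type*} [NormedAddCommGroup E] [InnerProductSpace ℝ E]

theorem sub_le_inner_of_forall_add_inner_le {f : E → EReal} {a v : E}
    (h : ∀ y, f a + ((⟪y - a, v⟫ : ℝ) : EReal) ≤ f y) (y : E) :
    f a - f y ≤ ((⟪a - y, v⟫ : ℝ) : EReal) := by
  simpa only [← inner_neg_left, neg_sub] using EReal.sub_le_coe_neg_of_add_coe_le (h y)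

theorem LinearMap.IsSymmetric.three_point_identity {T : E →ₗ[ℝ] E} (hT : T.IsSymmetric)
    (a b : E) :
    ⟪T a, a⟫ - ⟪T b, b⟫ - ⟪T (b - a), b - a⟫ = 2 * ⟪T (a - b), b⟫ := by
  have hab : ⟪T a, b⟫ = ⟪T b, a⟫ := by rw [hT, real_inner_comm]
  simp only [map_sub, inner_sub_left, inner_sub_right]
  linarith

end

theorem fundamental_upper_inequality_general {H : Type*} [NormedAddCommGroup H]
    [InnerProductSpace ℝ H] [CompleteSpace H]
    (f g : H → EReal) (S : H →L[ℝ] H)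
    (U Uinv : ℕ → H →L[ℝ] H) (hUsa : ∀ k, IsSelfAdjoint (U k))
    (hinv₁ : ∀ k, U k ∘L Uinv k = ContinuousLinearMap.id ℝ H)
    (γ lam : ℕ → ℝ) (hγ : ∀ k, 0 < γ k) (hlam : ∀ k, 0 < lam k)
    (z xf xg xS gf gg : ℕ → H)
    (hgf : ∀ k, ∀ y : H, f (xf k) + ((⟪y - xf k, gf k⟫ : ℝ) : EReal) ≤ f y)
    (hgg : ∀ k, ∀ y : H, g (xg k) + ((⟪y - xg k, gg k⟫ : ℝ) : EReal) ≤ g y)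
    (hrec : ∀ k, z (k + 1) =
      z k - (γ k * lam k) • Uinv k (gf k + gg k + S (xS k))) :
    ∀ (x : H) (k : ℕ),
      ((2 * γ k * lam k : ℝ) : EReal) *
          (f (xf k) + g (xg k) + ((⟪S (xS k), -x⟫ : ℝ) : EReal) - f x - g x) ≤
        ((⟪U k (z k - x), z k - x⟫ - ⟪U k (z (k + 1) - x), z (k + 1) - x⟫ -
            ⟪U k (z (k + 1) - z k), z (k + 1) - z k⟫ +
            2 * γ k * lam k * ⟪xf k - z (k + 1), gf k⟫ +
            2 * γ k * lam k * ⟪xg k - z (k + 1), gg k⟫ +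
            2 * γ k * lam k * ⟪-z (k + 1), S (xS k)⟫ : ℝ) : EReal) := by
  intro x k
  have hpos : 0 ≤ 2 * γ k * lam k := (mul_pos (mul_pos two_pos (hγ k)) (hlam k)).le
  have hstep : U k (z k - z (k + 1)) = (γ k * lam k) • (gf k + gg k + S (xS k)) := by
    rw [hrec k, sub_sub_cancel, map_smul, ← ContinuousLinearMap.comp_apply, hinv₁ k,
      ContinuousLinearMap.id_apply]
  have hgap := EReal.add_add_coe_sub_sub_le (sub_le_inner_of_forall_add_inner_le (hgf k) x)
    (sub_le_inner_of_forall_add_inner_le (hgg k) x) ⟪S (xS k), -x⟫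
  refine (mul_le_mul_of_nonneg_left hgap (EReal.coe_nonneg.2 hpos)).trans_eq ?_
  rw [← EReal.coe_mul, EReal.coe_eq_coe_iff]
  have hmetric := (hUsa k).isSymmetric.three_point_identity (z k - x) (z (k + 1) - x)
  rw [sub_sub_sub_cancel_right, sub_sub_sub_cancel_right, ContinuousLinearMap.coe_coe,
    hstep] at hmetric
  rw [hmetric]
  simp only [real_inner_smul_left, inner_add_left, inner_sub_left, inner_sub_right,
    inner_neg_left, inner_neg_right]
  rw [real_inner_comm (z (k + 1)) (gf k), real_inner_comm (z (k + 1)) (gg k),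
    real_inner_comm (z (k + 1)) (S (xS k)), real_inner_comm x (gf k), real_inner_comm x (gg k)]
  ring

/-- Upper fundamental inequality for the unifying primal-dual scheme: the pre-primal-dual
gap `G^pre(x_f^k, x_g^k, x_S^k; x)` is bounded by the telescoping metric terms plus the
upper key term. -/
theorem fundamental_upper_inequality {H : Type*} [NormedAddCommGroup H]
    [InnerProductSpace ℝ H] [CompleteSpace H]
    (f g : H → EReal) (S : H →L[ℝ] H)
    (hskew : ContinuousLinearMap.adjoint S = -S)
    (ρ : ℝ) (hρ : 0 < ρ)
    (U Uinv : ℕ → H →L[ℝ] H) (hUsa : ∀ k, IsSelfAdjoint (U k))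
    (hUρ : ∀ k (x : H), ρ * ‖x‖ ^ 2 ≤ ⟪U k x, x⟫)
    (hinv₁ : ∀ k, U k ∘L Uinv k = ContinuousLinearMap.id ℝ H)
    (hinv₂ : ∀ k, Uinv k ∘L U k = ContinuousLinearMap.id ℝ H)
    (γ lam : ℕ → ℝ) (hγ : ∀ k, 0 < γ k) (hlam : ∀ k, 0 < lam k)
    (z xf xg xS gf gg : ℕ → H)
    (hgf : ∀ k, ∀ y : H, f (xf k) + ((⟪y - xf k, gf k⟫ : ℝ) : EReal) ≤ f y)
    (hgg : ∀ k, ∀ y : H, g (xg k) + ((⟪y - xg k, gg k⟫ : ℝ) : EReal) ≤ g y)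
    (hrec : ∀ k, z (k + 1) =
      z k - (γ k * lam k) • Uinv k (gf k + gg k + S (xS k))) :
    ∀ (x : H) (k : ℕ),
      ((2 * γ k * lam k : ℝ) : EReal) *
          (f (xf k) + g (xg k) + ((⟪S (xS k), -x⟫ : ℝ) : EReal) - f x - g x) ≤
        ((⟪U k (z k - x), z k - x⟫ - ⟪U k (z (k + 1) - x), z (k + 1) - x⟫ -
            ⟪U k (z (k + 1) - z k), z (k + 1) - z k⟫ +
            2 * γ k * lam k * ⟪xf k - z (k + 1), gf k⟫ +
            2 * γ k * lam k * ⟪xg k - z (k + 1), gg k⟫ +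
            2 * γ k * lam k * ⟪-z (k + 1), S (xS k)⟫ : ℝ) : EReal) :=
  fundamental_upper_inequality_general f g S U Uinv hUsa hinv₁ γ lam hγ hlam z xf xg xS gf gg hgf
    hgg hrec
end

section
/- Let U ⪰ ρI be self-adjoint, γ ∈ (0, 2βρ), g convex Fréchet differentiable with ∇g (1/β)-Lipschitz, and A maximally monotone (in particular A = ∂f + S). Then the forward-backward operator T = J_{γU⁻¹A} ∘ (I − γU⁻¹∇g) is α-averaged in ‖·‖_U with α = 2βρ/(4βρ − γ), and its fixed point set equals zer(A + ∇g). -/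
/-!
Both steps of `T` are averaged for the norm `‖x‖²_U = ⟪U x, x⟫`. By Baillon–Haddad `∇g` is
`β`-cocoercive, so `U⁻¹∇g` is `βρ`-cocoercive in `‖·‖_U` (since `ρ ⟪U w, w⟫ ≤ ‖U w‖²`), which
makes the forward step `I - γU⁻¹∇g` `γ/(2βρ)`-averaged; monotonicity of `A` makes the backward
step `J` firmly nonexpansive, i.e. `1/2`-averaged.

A map `T` is `α`-averaged iff `‖Tx - Ty‖²_U + κ ‖(x - Tx) - (y - Ty)‖²_U ≤ ‖x - y‖²_U` with
`κ = (1 - α)/α`. Along a composition the two defect terms add up, and the weighted Young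
inequality `κ₁κ₂/(κ₁ + κ₂) ‖a + b‖² ≤ κ₁‖a‖² + κ₂‖b‖²` merges them into one defect term with
`κ = κ₁κ₂/(κ₁ + κ₂)`; for `κ₁ = 1` and `κ₂ = (2βρ - γ)/γ` this gives `α = 2βρ/(4βρ - γ)`.

Since `U ≥ ρI`, monotonicity of `A` also makes `J z = w` equivalent to `γ⁻¹U(z - w) ∈ A w`, and
taking `z = w - γU⁻¹∇g w` shows that `T w = w` iff `-∇g w ∈ A w`.
-/

open RealInnerProductSpace Set

section

variable {H : Type*} [NormedAddCommGroup H] [InnerProductSpace ℝ H]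

section Gradient

variable [CompleteSpace H] {f : H → ℝ} {f' : H → H}

theorem HasGradientAt.hasDerivAt_comp_add_smul {a v g : H} {t : ℝ}
    (hf : HasGradientAt f g (a + t • v)) :
    HasDerivAt (fun s : ℝ => f (a + s • v)) ⟪g, v⟫ t := by
  have hline : HasDerivAt (fun s : ℝ => a + s • v) v t := by
    simpa using ((hasDerivAt_id t).smul_const v).const_add a
  have h := hf.hasFDerivAt.comp_hasDerivAt t hline
  simp only [Function.comp_def, InnerProductSpace.toDual_apply_apply] at h
  exact h

theorem ConvexOn.add_inner_le_of_hasGradientAt (hf : ConvexOn ℝ univ f) {a b g : H}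
    (hg : HasGradientAt f g a) : f a + ⟪g, b - a⟫ ≤ f b := by
  have hline : ConvexOn ℝ univ (fun s : ℝ => f (a + s • (b - a))) := by
    simpa [Function.comp_def, AffineMap.lineMap_apply, add_comm] using
      hf.comp_affineMap (AffineMap.lineMap a b : ℝ →ᵃ[ℝ] H)
  have hderiv := (show HasGradientAt f g (a + (0 : ℝ) • (b - a)) by simpa using hg)
    |>.hasDerivAt_comp_add_smul
  have hslope := hline.le_slope_of_hasDerivAt (mem_univ 0) (mem_univ 1) zero_lt_one hderiv
  simp only [slope_def_field, one_smul, add_sub_cancel, zero_smul, add_zero, sub_zero,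
    div_one] at hslope
  linarith

theorem apply_add_le_of_lipschitz_gradient {L : ℝ}
    (hf : ∀ x, HasGradientAt f (f' x) x) (hL : ∀ x y, ‖f' x - f' y‖ ≤ L * ‖x - y‖) (a v : H) :
    f (a + v) ≤ f a + ⟪f' a, v⟫ + L / 2 * ‖v‖ ^ 2 := by
  set ψ : ℝ → ℝ := fun t => f (a + t • v) - t * ⟪f' a, v⟫ - t ^ 2 * (L / 2 * ‖v‖ ^ 2)
  have hψ : ∀ t, HasDerivAt ψ (⟪f' (a + t • v) - f' a, v⟫ - t * (L * ‖v‖ ^ 2)) t := by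
    intro t
    have h := (((hf (a + t • v)).hasDerivAt_comp_add_smul).sub
      ((hasDerivAt_id t).mul_const ⟪f' a, v⟫)).sub
      ((hasDerivAt_pow 2 t).mul_const (L / 2 * ‖v‖ ^ 2))
    refine h.congr_deriv ?_
    simp only [inner_sub_left]
    ring
  have hanti : AntitoneOn ψ (Icc 0 1) := by
    refine antitoneOn_of_deriv_nonpos (convex_Icc 0 1)
      (fun t _ => (hψ t).continuousAt.continuousWithinAt)
      (fun t _ => (hψ t).differentiableAt.differentiableWithinAt) fun t ht => ?_
    rw [interior_Icc] at ht
    have hlip := hL (a + t • v) a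
    rw [add_sub_cancel_left, norm_smul, Real.norm_of_nonneg ht.1.le] at hlip
    calc deriv ψ t = ⟪f' (a + t • v) - f' a, v⟫ - t * (L * ‖v‖ ^ 2) := (hψ t).deriv
      _ ≤ ‖f' (a + t • v) - f' a‖ * ‖v‖ - t * (L * ‖v‖ ^ 2) := by
        gcongr; exact real_inner_le_norm _ _
      _ ≤ L * (t * ‖v‖) * ‖v‖ - t * (L * ‖v‖ ^ 2) := by gcongr
      _ = 0 := by ring
  have hψ01 := hanti (left_mem_Icc.2 zero_le_one) (right_mem_Icc.2 zero_le_one) zero_le_one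
  simp only [ψ, one_smul, one_mul, one_pow, zero_smul, add_zero, zero_mul, sub_zero,
    ne_eq, OfNat.ofNat_ne_zero, not_false_eq_true, zero_pow] at hψ01
  linarith

theorem ConvexOn.add_inner_add_sq_le_of_lipschitz_gradient {L : ℝ} (hL₀ : 0 < L)
    (hconv : ConvexOn ℝ univ f) (hf : ∀ x, HasGradientAt f (f' x) x)
    (hL : ∀ x y, ‖f' x - f' y‖ ≤ L * ‖x - y‖) (x y : H) :
    f y + ⟪f' y, x - y⟫ + 1 / (2 * L) * ‖f' x - f' y‖ ^ 2 ≤ f x := by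
  set v : H := -L⁻¹ • (f' x - f' y)
  have hfirst := hconv.add_inner_le_of_hasGradientAt (b := x + v) (hf y)
  have hdescent := apply_add_le_of_lipschitz_gradient hf hL x v
  have hv : ⟪f' x, v⟫ - ⟪f' y, v⟫ = -L⁻¹ * ‖f' x - f' y‖ ^ 2 := by
    rw [← inner_sub_left, real_inner_smul_right, real_inner_self_eq_norm_sq]
  have hvv : ‖v‖ ^ 2 = L⁻¹ ^ 2 * ‖f' x - f' y‖ ^ 2 := by
    rw [norm_smul, norm_neg, Real.norm_of_nonneg (inv_nonneg.2 hL₀.le), mul_pow]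
  rw [show x + v - y = (x - y) + v by abel, inner_add_right] at hfirst
  rw [hvv] at hdescent
  have hcoef : L / 2 * (L⁻¹ ^ 2 * ‖f' x - f' y‖ ^ 2)
      = L⁻¹ * ‖f' x - f' y‖ ^ 2 - 1 / (2 * L) * ‖f' x - f' y‖ ^ 2 := by
    field_simp; ring
  linarith

theorem ConvexOn.cocoercive_of_lipschitz_gradient {L : ℝ} (hL₀ : 0 < L)
    (hconv : ConvexOn ℝ univ f) (hf : ∀ x, HasGradientAt f (f' x) x)
    (hL : ∀ x y, ‖f' x - f' y‖ ≤ L * ‖x - y‖) (x y : H) :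
    1 / L * ‖f' x - f' y‖ ^ 2 ≤ ⟪f' x - f' y, x - y⟫ := by
  have hxy := hconv.add_inner_add_sq_le_of_lipschitz_gradient hL₀ hf hL x y
  have hyx := hconv.add_inner_add_sq_le_of_lipschitz_gradient hL₀ hf hL y x
  rw [norm_sub_rev] at hyx
  have hinner : ⟪f' x - f' y, x - y⟫ = -⟪f' y, x - y⟫ - ⟪f' x, y - x⟫ := by
    rw [inner_sub_left, ← neg_sub x y, inner_neg_right]; ring
  have hcoef : 1 / L = 2 * (1 / (2 * L)) := by field_simp
  rw [hinner, hcoef]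
  linarith

end Gradient

def IsAveraged (U : H →L[ℝ] H) (α : ℝ) (T : H → H) : Prop :=
  ∃ N : H → H, (∀ x y, ⟪U (N x - N y), N x - N y⟫ ≤ ⟪U (x - y), x - y⟫) ∧
    ∀ z, T z = (1 - α) • z + α • N z

section Averaged

variable {U : H →L[ℝ] H} {α : ℝ} {T N : H → H}

theorem inner_apply_sub_add_eq_of_eq_smul_add_smul
    (hT : ∀ z, T z = (1 - α) • z + α • N z) (x y : H) :
    ⟪U (T x - T y), T x - T y⟫
        + (1 - α) / α * ⟪U ((x - T x) - (y - T y)), (x - T x) - (y - T y)⟫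
      = (1 - α) * ⟪U (x - y), x - y⟫ + α * ⟪U (N x - N y), N x - N y⟫ := by
  have e₁ : T x - T y = (1 - α) • (x - y) + α • (N x - N y) := by rw [hT, hT]; module
  have e₂ : (x - T x) - (y - T y) = α • ((x - y) - (N x - N y)) := by rw [hT, hT]; module
  rw [e₁, e₂]
  simp only [map_add, map_sub, map_smul, inner_add_left, inner_add_right, inner_sub_left,
    inner_sub_right, real_inner_smul_left, real_inner_smul_right]
  field_simp
  ring

theorem isAveraged_iff (hα : 0 < α) :
    IsAveraged U α T ↔ ∀ x y, ⟪U (T x - T y), T x - T y⟫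
        + (1 - α) / α * ⟪U ((x - T x) - (y - T y)), (x - T x) - (y - T y)⟫
      ≤ ⟪U (x - y), x - y⟫ := by
  constructor
  · rintro ⟨N, hN, hT⟩ x y
    rw [inner_apply_sub_add_eq_of_eq_smul_add_smul hT]
    linarith [mul_le_mul_of_nonneg_left (hN x y) hα.le]
  · intro h
    have hT : ∀ z, T z = (1 - α) • z + α • (z + α⁻¹ • (T z - z)) := fun z => by
      rw [smul_add, smul_smul, mul_inv_cancel₀ hα.ne']; module
    refine ⟨_, fun x y => ?_, hT⟩
    have hxy := h x y
    rw [inner_apply_sub_add_eq_of_eq_smul_add_smul hT] at hxy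
    exact le_of_mul_le_mul_left (by linarith) hα

theorem mul_inner_apply_add_le (hU : ∀ x, 0 ≤ ⟪U x, x⟫) {κ₁ κ₂ : ℝ}
    (h₁ : 0 < κ₁) (h₂ : 0 < κ₂) (a b : H) :
    κ₁ * κ₂ / (κ₁ + κ₂) * ⟪U (a + b), a + b⟫ ≤ κ₁ * ⟪U a, a⟫ + κ₂ * ⟪U b, b⟫ := by
  rw [div_mul_eq_mul_div, div_le_iff₀ (by positivity)]
  -- the difference of the two sides is `⟪U c, c⟫` for `c = κ₁ • a - κ₂ • b`
  have hc := hU (κ₁ • a - κ₂ • b)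
  simp only [map_add, map_sub, map_smul, inner_add_left, inner_add_right, inner_sub_left,
    inner_sub_right, real_inner_smul_left, real_inner_smul_right] at hc ⊢
  linear_combination hc

theorem IsAveraged.comp (hU : ∀ x, 0 ≤ ⟪U x, x⟫) {α₁ α₂ : ℝ} {T₁ T₂ : H → H}
    (hα₁ : α₁ ∈ Ioo 0 1) (hα₂ : α₂ ∈ Ioo 0 1) (h₁ : IsAveraged U α₁ T₁)
    (h₂ : IsAveraged U α₂ T₂) :
    IsAveraged U ((α₁ + α₂ - 2 * α₁ * α₂) / (1 - α₁ * α₂)) (T₁ ∘ T₂) := by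
  obtain ⟨hα₁0, hα₁1⟩ := hα₁
  obtain ⟨hα₂0, hα₂1⟩ := hα₂
  have hden : 0 < 1 - α₁ * α₂ := by nlinarith
  have hnum : 0 < α₁ + α₂ - 2 * α₁ * α₂ := by nlinarith
  rw [isAveraged_iff hα₁0] at h₁
  rw [isAveraged_iff hα₂0] at h₂
  rw [isAveraged_iff (div_pos hnum hden)]
  intro x y
  have hyoung := mul_inner_apply_add_le hU (κ₁ := (1 - α₁) / α₁) (κ₂ := (1 - α₂) / α₂)
    (div_pos (by linarith) hα₁0) (div_pos (by linarith) hα₂0)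
    ((T₂ x - T₁ (T₂ x)) - (T₂ y - T₁ (T₂ y))) ((x - T₂ x) - (y - T₂ y))
  have hκ : (1 - (α₁ + α₂ - 2 * α₁ * α₂) / (1 - α₁ * α₂))
        / ((α₁ + α₂ - 2 * α₁ * α₂) / (1 - α₁ * α₂))
      = (1 - α₁) / α₁ * ((1 - α₂) / α₂) / ((1 - α₁) / α₁ + (1 - α₂) / α₂) := by
    have hsum : (1 - α₁) / α₁ + (1 - α₂) / α₂ = (α₁ + α₂ - 2 * α₁ * α₂) / (α₁ * α₂) := by
      field_simp; ring
    have hnum₀ := hnum.ne'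
    rw [hsum, one_sub_div hden.ne', div_div_div_cancel_right₀ hden.ne']
    field_simp
    ring
  rw [show (T₂ x - T₁ (T₂ x)) - (T₂ y - T₁ (T₂ y)) + ((x - T₂ x) - (y - T₂ y))
    = (x - T₁ (T₂ x)) - (y - T₁ (T₂ y)) by abel] at hyoung
  simp only [Function.comp_apply, hκ]
  linarith [h₁ (T₂ x) (T₂ y), h₂ x y]

end Averaged

section Metric

variable {U : H →L[ℝ] H}

theorem isAveraged_sub_smul_of_cocoercive (hU : (U : H →ₗ[ℝ] H).IsSymmetric) {C : H → H}
    {κ γ : ℝ} (hκ : 0 < κ) (hγ : 0 < γ)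
    (hC : ∀ x y, κ * ⟪U (C x - C y), C x - C y⟫ ≤ ⟪U (C x - C y), x - y⟫) :
    IsAveraged U (γ / (2 * κ)) (fun z => z - γ • C z) := by
  rw [isAveraged_iff (by positivity)]
  intro x y
  rw [show x - γ • C x - (y - γ • C y) = (x - y) - γ • (C x - C y) by module,
    show x - (x - γ • C x) - (y - (y - γ • C y)) = γ • (C x - C y) by module]
  have hC' := hC x y
  set d := x - y
  set w := C x - C y
  have hsymm : ⟪U d, w⟫ = ⟪U w, d⟫ := by rw [real_inner_comm]; exact (hU w d).symm
  have hcoef : (1 - γ / (2 * κ)) / (γ / (2 * κ)) * (γ * γ) = γ * (2 * κ - γ) := by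
    field_simp
  simp only [map_sub, map_smul, inner_sub_left, inner_sub_right, real_inner_smul_left,
    real_inner_smul_right]
  linear_combination (2 * γ) * hC' - γ * hsymm + ⟪U w, w⟫ * hcoef

theorem mul_inner_apply_self_le_norm_apply_sq {ρ : ℝ} (hρ : 0 ≤ ρ)
    (hstrong : ∀ x, ρ * ‖x‖ ^ 2 ≤ ⟪U x, x⟫) (w : H) : ρ * ⟪U w, w⟫ ≤ ‖U w‖ ^ 2 := by
  have hcs : ρ * ⟪U w, w⟫ ≤ ρ * (‖U w‖ * ‖w‖) :=
    mul_le_mul_of_nonneg_left (real_inner_le_norm _ _) hρ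
  nlinarith [hstrong w, sq_nonneg (ρ * ‖w‖ - ‖U w‖)]

theorem cocoercive_comp_rightInverse {V : H →L[ℝ] H} (hUV : ∀ x, U (V x) = x) {ρ β : ℝ}
    (hρ : 0 ≤ ρ) (hβ : 0 ≤ β) (hstrong : ∀ x, ρ * ‖x‖ ^ 2 ≤ ⟪U x, x⟫) {F : H → H}
    (hF : ∀ x y, β * ‖F x - F y‖ ^ 2 ≤ ⟪F x - F y, x - y⟫) (x y : H) :
    β * ρ * ⟪U (V (F x) - V (F y)), V (F x) - V (F y)⟫
      ≤ ⟪U (V (F x) - V (F y)), x - y⟫ := by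
  have hUw : U (V (F x) - V (F y)) = F x - F y := by rw [map_sub, hUV, hUV]
  have hρw := mul_inner_apply_self_le_norm_apply_sq hρ hstrong (V (F x) - V (F y))
  rw [hUw] at hρw ⊢
  rw [mul_assoc]
  exact (mul_le_mul_of_nonneg_left hρw hβ).trans (hF x y)

section Resolvent

variable {A : H → Set H} {γ : ℝ}

theorem inner_apply_sub_sub_nonneg_of_mem
    (hA : ∀ x y u v, u ∈ A x → v ∈ A y → 0 ≤ ⟪x - y, u - v⟫) (hγ : 0 < γ) {z z' p p' : H}
    (hp : γ⁻¹ • U (z - p) ∈ A p) (hp' : γ⁻¹ • U (z' - p') ∈ A p') :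
    0 ≤ ⟪U ((z - p) - (z' - p')), p - p'⟫ := by
  have h := hA _ _ _ _ hp hp'
  rw [← smul_sub, ← map_sub, real_inner_smul_right, real_inner_comm] at h
  exact nonneg_of_mul_nonneg_right h (inv_pos.2 hγ)

variable {J : H → H}

theorem isAveraged_half_of_resolvent (hU : (U : H →ₗ[ℝ] H).IsSymmetric)
    (hA : ∀ x y u v, u ∈ A x → v ∈ A y → 0 ≤ ⟪x - y, u - v⟫) (hγ : 0 < γ)
    (hJ : ∀ z, γ⁻¹ • U (z - J z) ∈ A (J z)) : IsAveraged U (1 / 2) J := by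
  rw [isAveraged_iff one_half_pos]
  intro x y
  have h := inner_apply_sub_sub_nonneg_of_mem hA hγ (hJ x) (hJ y)
  rw [show x - y = (J x - J y) + ((x - J x) - (y - J y)) by abel]
  set p := J x - J y
  set r := (x - J x) - (y - J y)
  have hsymm : ⟪U p, r⟫ = ⟪U r, p⟫ := by rw [real_inner_comm]; exact (hU r p).symm
  simp only [map_add, inner_add_left, inner_add_right]
  rw [show (1 - 1 / 2 : ℝ) / (1 / 2) = 1 by norm_num, one_mul]
  linarith

theorem resolvent_eq_iff {ρ : ℝ} (hρ : 0 < ρ) (hstrong : ∀ x, ρ * ‖x‖ ^ 2 ≤ ⟪U x, x⟫)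
    (hA : ∀ x y u v, u ∈ A x → v ∈ A y → 0 ≤ ⟪x - y, u - v⟫) (hγ : 0 < γ)
    (hJ : ∀ z, γ⁻¹ • U (z - J z) ∈ A (J z)) {z w : H} :
    J z = w ↔ γ⁻¹ • U (z - w) ∈ A w := by
  refine ⟨fun h => h ▸ hJ z, fun hw => ?_⟩
  have h := inner_apply_sub_sub_nonneg_of_mem hA hγ (hJ z) hw
  rw [show z - J z - (z - w) = -(J z - w) by abel, map_neg, inner_neg_left] at h
  have hsq : ‖J z - w‖ ^ 2 ≤ 0 := by nlinarith [hstrong (J z - w)]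
  simpa [sub_eq_zero] using hsq

end Resolvent

end Metric

end

theorem forward_backward_averaged_general {H : Type*} [NormedAddCommGroup H]
    [InnerProductSpace ℝ H] [CompleteSpace H]
    (ρ β γ : ℝ) (hρ : 0 < ρ) (hβ : 0 < β) (hγ : γ ∈ Set.Ioo 0 (2 * β * ρ))
    (U Uinv : H →L[ℝ] H) (hU : IsSelfAdjoint U)
    (hstrong : ∀ x : H, ρ * ‖x‖ ^ 2 ≤ ⟪U x, x⟫)
    (hinv₁ : U ∘L Uinv = ContinuousLinearMap.id ℝ H)
    (A : H → Set H)
    (hmono : ∀ x y u v : H, u ∈ A x → v ∈ A y → 0 ≤ ⟪x - y, u - v⟫)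
    (g : H → ℝ) (hgconv : ConvexOn ℝ Set.univ g)
    (g' : H → H) (hg' : ∀ x : H, HasGradientAt g (g' x) x)
    (hlip : ∀ x y : H, ‖g' x - g' y‖ ≤ (1 / β) * ‖x - y‖)
    (J : H → H) (hJ : ∀ z : H, γ⁻¹ • U (z - J z) ∈ A (J z))
    (T : H → H) (hT : ∀ z : H, T z = J (z - γ • Uinv (g' z))) :
    (∃ N : H → H,
        (∀ x y : H, ⟪U (N x - N y), N x - N y⟫ ≤ ⟪U (x - y), x - y⟫) ∧
        ∀ z : H, T z = (1 - 2 * β * ρ / (4 * β * ρ - γ)) • z +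
          (2 * β * ρ / (4 * β * ρ - γ)) • N z) ∧
    {z : H | T z = z} = {z : H | -g' z ∈ A z} := by
  obtain ⟨hγ₀, hγ₁⟩ := hγ
  have hUUinv (x : H) : U (Uinv x) = x := congr($hinv₁ x)
  have hpos (x : H) : 0 ≤ ⟪U x, x⟫ := (by positivity : 0 ≤ ρ * ‖x‖ ^ 2).trans (hstrong x)
  have hgrad (x y : H) : β * ‖g' x - g' y‖ ^ 2 ≤ ⟪g' x - g' y, x - y⟫ := by
    simpa using hgconv.cocoercive_of_lipschitz_gradient (one_div_pos.2 hβ) hg' hlip x y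
  have hforward : IsAveraged U (γ / (2 * (β * ρ))) fun z => z - γ • Uinv (g' z) :=
    isAveraged_sub_smul_of_cocoercive hU.isSymmetric (by positivity) hγ₀
      (cocoercive_comp_rightInverse hUUinv hρ.le hβ.le hstrong hgrad)
  have hbackward : IsAveraged U (1 / 2) J :=
    isAveraged_half_of_resolvent hU.isSymmetric hmono hγ₀ hJ
  have hα : (1 / 2 + γ / (2 * (β * ρ)) - 2 * (1 / 2) * (γ / (2 * (β * ρ))))
      / (1 - 1 / 2 * (γ / (2 * (β * ρ)))) = 2 * β * ρ / (4 * β * ρ - γ) := by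
    have : 4 * β * ρ - γ ≠ 0 := by linarith
    field_simp
    ring
  have hcomp := hbackward.comp hpos ⟨one_half_pos, one_half_lt_one⟩
    ⟨by positivity, by rw [div_lt_one (by positivity)]; linarith⟩ hforward
  rw [hα, ← show T = J ∘ fun z => z - γ • Uinv (g' z) from funext hT] at hcomp
  refine ⟨hcomp, Set.ext fun z => show T z = z ↔ -g' z ∈ A z from ?_⟩
  rw [hT, resolvent_eq_iff hρ hstrong hmono hγ₀ hJ, sub_sub_cancel_left, map_neg, map_smul,
    hUUinv, smul_neg, inv_smul_smul₀ hγ₀.ne']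

/-- The forward-backward operator `T = J_{γU⁻¹A} ∘ (I - γU⁻¹∇g)` is
`α = 2βρ/(4βρ - γ)`-averaged in `‖·‖_U` for `γ ∈ (0, 2βρ)`, and its fixed point set
equals `zer(A + ∇g)`. -/
theorem forward_backward_averaged {H : Type*} [NormedAddCommGroup H]
    [InnerProductSpace ℝ H] [CompleteSpace H]
    (ρ β γ : ℝ) (hρ : 0 < ρ) (hβ : 0 < β) (hγ : γ ∈ Set.Ioo 0 (2 * β * ρ))
    (U Uinv : H →L[ℝ] H) (hU : IsSelfAdjoint U)
    (hstrong : ∀ x : H, ρ * ‖x‖ ^ 2 ≤ ⟪U x, x⟫)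
    (hinv₁ : U ∘L Uinv = ContinuousLinearMap.id ℝ H)
    (hinv₂ : Uinv ∘L U = ContinuousLinearMap.id ℝ H)
    (A : H → Set H)
    (hmono : ∀ x y u v : H, u ∈ A x → v ∈ A y → 0 ≤ ⟪x - y, u - v⟫)
    (hmax : ∀ x u : H, (∀ y v : H, v ∈ A y → 0 ≤ ⟪x - y, u - v⟫) → u ∈ A x)
    (g : H → ℝ) (hgconv : ConvexOn ℝ Set.univ g)
    (g' : H → H) (hg' : ∀ x : H, HasGradientAt g (g' x) x)
    (hlip : ∀ x y : H, ‖g' x - g' y‖ ≤ (1 / β) * ‖x - y‖)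
    (J : H → H) (hJ : ∀ z : H, γ⁻¹ • U (z - J z) ∈ A (J z))
    (T : H → H) (hT : ∀ z : H, T z = J (z - γ • Uinv (g' z))) :
    (∃ N : H → H,
        (∀ x y : H, ⟪U (N x - N y), N x - N y⟫ ≤ ⟪U (x - y), x - y⟫) ∧
        ∀ z : H, T z = (1 - 2 * β * ρ / (4 * β * ρ - γ)) • z +
          (2 * β * ρ / (4 * β * ρ - γ)) • N z) ∧
    {z : H | T z = z} = {z : H | -g' z ∈ A z} :=
  forward_backward_averaged_general ρ β γ hρ hβ hγ U Uinv hU hstrong hinv₁ A hmono g hgconv g' hg'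
    hlip J hJ T hT
end

section
/- (FPR convergence rate) Let α ∈ (0,1), U ⪰ ρI self-adjoint, T : H → H α-averaged in ‖·‖_U with fixed point z*, and (λ_j) ⊆ (0, 1/α) with τ_k := (1−αλ_k)λ_k/α and τ̲ := inf_j τ_j > 0. Define z^{k+1} = (1−λ_k)z^k + λ_k T z^k. Then for all k: ‖Tz^k − z^k‖²_U ≤ ‖z^0 − z*‖²_U / (τ̲(k+1)). -/
/-!
With `Q x = ⟪U x, x⟫` and `T = (1 - α) I + α N`, the iteration is the Krasnosel'skiĭ–Mann scheme
`z⁺ = (1 - t) z + t N z` with `t = α λ ∈ (0, 1)`, and `Q (T z - z) = α² Q (N z - z)`.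
Everything rests on the identity `Q ((1 - t) x + t y) = (1 - t) Q x + t Q y - t (1 - t) Q (x - y)`
for symmetric `U`. With `x = z - z*`, `y = N z - z*` it gives the descent
`Q (z⁺ - z*) + t (1 - t) Q (N z - z) ≤ Q (z - z*)`; with `x = N z - z`, `y = t⁻¹ (N z⁺ - N z)` it
shows that the residual `Q (N z - z)` is nonincreasing. Summing the descents, the last residual
is bounded by their average.
-/

open RealInnerProductSpace

theorem Antitone.succ_mul_le_of_descent {r d : ℕ → ℝ} (hr : Antitone r) (hd : ∀ k, 0 ≤ d k)
    (hdesc : ∀ k, d (k + 1) + r k ≤ d k) (k : ℕ) : (k + 1) * r k ≤ d 0 := by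
  suffices h : ∀ k : ℕ, (k + 1) * r k + d (k + 1) ≤ d 0 by linarith [h k, hd (k + 1)]
  intro k
  induction k with
  | zero => simpa [add_comm] using hdesc 0
  | succ k ih =>
    have hmono : (k + 1) * r (k + 1) ≤ (k + 1) * r k :=
      mul_le_mul_of_nonneg_left (hr k.le_succ) (by positivity)
    push_cast
    linarith [hdesc (k + 1)]

section KrasnoselskiiMann

variable {H : Type*} [NormedAddCommGroup H] [InnerProductSpace ℝ H] {U : H →ₗ[ℝ] H}
  {N : H → H}

theorem inner_map_smul_self (c : ℝ) (x : H) : ⟪U (c • x), c • x⟫ = c ^ 2 * ⟪U x, x⟫ := by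
  simp only [map_smul, real_inner_smul_left, real_inner_smul_right]
  ring

theorem inner_map_sub_comm (x y : H) : ⟪U (x - y), x - y⟫ = ⟪U (y - x), y - x⟫ := by
  rw [← neg_sub y x, ← neg_one_smul ℝ (y - x), inner_map_smul_self]
  ring

theorem LinearMap.IsSymmetric.inner_map_convexComb (hU : U.IsSymmetric) (t : ℝ) (x y : H) :
    ⟪U ((1 - t) • x + t • y), (1 - t) • x + t • y⟫ =
      (1 - t) * ⟪U x, x⟫ + t * ⟪U y, y⟫ - t * (1 - t) * ⟪U (x - y), x - y⟫ := by
  have hsymm : ⟪U y, x⟫ = ⟪U x, y⟫ := (hU y x).trans (real_inner_comm _ _)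
  simp only [map_add, map_sub, map_smul, inner_add_left, inner_add_right, inner_sub_left,
    inner_sub_right, real_inner_smul_left, real_inner_smul_right, hsymm]
  ring

theorem LinearMap.IsSymmetric.km_step_descent (hU : U.IsSymmetric)
    (hN : ∀ x y, ⟪U (N x - N y), N x - N y⟫ ≤ ⟪U (x - y), x - y⟫) {zs : H} (hfix : N zs = zs)
    {t : ℝ} (ht : 0 ≤ t) (x : H) :
    ⟪U ((1 - t) • x + t • N x - zs), (1 - t) • x + t • N x - zs⟫ +
        t * (1 - t) * ⟪U (N x - x), N x - x⟫ ≤ ⟪U (x - zs), x - zs⟫ := by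
  have hsplit : (1 - t) • x + t • N x - zs = (1 - t) • (x - zs) + t • (N x - zs) := by module
  have hnonexp : ⟪U (N x - zs), N x - zs⟫ ≤ ⟪U (x - zs), x - zs⟫ := by
    simpa only [hfix] using hN x zs
  rw [hsplit, hU.inner_map_convexComb, sub_sub_sub_cancel_right, inner_map_sub_comm x (N x)]
  nlinarith

theorem LinearMap.IsSymmetric.km_residual_antitone (hU : U.IsSymmetric) (hQ : ∀ x, 0 ≤ ⟪U x, x⟫)
    (hN : ∀ x y, ⟪U (N x - N y), N x - N y⟫ ≤ ⟪U (x - y), x - y⟫)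
    {t : ℝ} (ht : t ∈ Set.Ioo (0 : ℝ) 1) (x : H) :
    ⟪U (N ((1 - t) • x + t • N x) - ((1 - t) • x + t • N x)),
        N ((1 - t) • x + t • N x) - ((1 - t) • x + t • N x)⟫ ≤ ⟪U (N x - x), N x - x⟫ := by
  obtain ⟨ht0, ht1⟩ := ht
  set x' := (1 - t) • x + t • N x
  set s := N x - x
  set w := t⁻¹ • (N x' - N x)
  have hsplit : N x' - x' = (1 - t) • s + t • w := by
    simp only [x', s, w, smul_smul, mul_inv_cancel₀ ht0.ne', one_smul]
    module
  have hw : ⟪U w, w⟫ ≤ ⟪U s, s⟫ := by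
    have hstep : x' - x = t • s := by simp only [x', s]; module
    have h := hN x' x
    rw [hstep, inner_map_smul_self] at h
    calc ⟪U w, w⟫ = (t⁻¹) ^ 2 * ⟪U (N x' - N x), N x' - N x⟫ := inner_map_smul_self _ _
      _ ≤ (t⁻¹) ^ 2 * (t ^ 2 * ⟪U s, s⟫) := by gcongr
      _ = ⟪U s, s⟫ := by field_simp
  rw [hsplit, hU.inner_map_convexComb]
  nlinarith [hQ (s - w), mul_pos ht0 (sub_pos.2 ht1)]

theorem LinearMap.IsSymmetric.km_rate (hU : U.IsSymmetric) (hQ : ∀ x, 0 ≤ ⟪U x, x⟫)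
    (hN : ∀ x y, ⟪U (N x - N y), N x - N y⟫ ≤ ⟪U (x - y), x - y⟫) {zs : H} (hfix : N zs = zs)
    {t : ℕ → ℝ} (ht : ∀ k, t k ∈ Set.Ioo (0 : ℝ) 1) {c : ℝ} (hc : 0 ≤ c)
    (hct : ∀ k, c ≤ t k * (1 - t k)) {z : ℕ → H}
    (hz : ∀ k, z (k + 1) = (1 - t k) • z k + t k • N (z k)) (k : ℕ) :
    (k + 1) * (c * ⟪U (N (z k) - z k), N (z k) - z k⟫) ≤ ⟪U (z 0 - zs), z 0 - zs⟫ := by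
  refine Antitone.succ_mul_le_of_descent (r := fun k => c * ⟪U (N (z k) - z k), N (z k) - z k⟫)
    (d := fun k => ⟪U (z k - zs), z k - zs⟫)
    (antitone_nat_of_succ_le fun k => ?_) (fun k => hQ _) (fun k => ?_) k
  · rw [hz]
    exact mul_le_mul_of_nonneg_left (hU.km_residual_antitone hQ hN (ht k) (z k)) hc
  · have hdesc := hU.km_step_descent hN hfix (ht k).1.le (z k)
    rw [← hz] at hdesc
    nlinarith [hct k, hQ (N (z k) - z k)]

end KrasnoselskiiMann

/-- Fixed-point residual convergence rate: for a relaxed KM iteration of an `α`-averaged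
map `T` in `‖·‖_U`, `‖Tz^k - z^k‖²_U ≤ ‖z^0 - z*‖²_U / (τ̲ (k+1))`. -/
theorem FPR_rate {H : Type*} [NormedAddCommGroup H] [InnerProductSpace ℝ H]
    [CompleteSpace H] (ρ α : ℝ) (hρ : 0 < ρ) (hα : α ∈ Set.Ioo (0 : ℝ) 1)
    (U : H →L[ℝ] H) (hU : IsSelfAdjoint U)
    (hstrong : ∀ x : H, ρ * ‖x‖ ^ 2 ≤ ⟪U x, x⟫)
    (T : H → H)
    (hT : ∃ N : H → H,
        (∀ x y : H, ⟪U (N x - N y), N x - N y⟫ ≤ ⟪U (x - y), x - y⟫) ∧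
        ∀ x : H, T x = (1 - α) • x + α • N x)
    (zs : H) (hfix : T zs = zs)
    (lam : ℕ → ℝ) (hlam : ∀ k, lam k ∈ Set.Ioo (0 : ℝ) (1 / α))
    (htau : 0 < ⨅ j : ℕ, (1 - α * lam j) * lam j / α)
    (z : ℕ → H) (hrec : ∀ k, z (k + 1) = (1 - lam k) • z k + lam k • T (z k)) :
    ∀ k : ℕ,
      ⟪U (T (z k) - z k), T (z k) - z k⟫ ≤
        ⟪U (z 0 - zs), z 0 - zs⟫ /
          ((⨅ j : ℕ, (1 - α * lam j) * lam j / α) * (k + 1)) := by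
  obtain ⟨N, hN, hTN⟩ := hT
  have hα0 := hα.1
  have hQ : ∀ x : H, 0 ≤ ⟪U x, x⟫ := fun x => (by positivity : 0 ≤ ρ * ‖x‖ ^ 2).trans (hstrong x)
  have hres : ∀ x, T x - x = α • (N x - x) := fun x => by rw [hTN]; module
  have hNfix : N zs = zs := by
    have h : α • (N zs - zs) = 0 := by rw [← hres, hfix, sub_self]
    exact sub_eq_zero.1 ((smul_eq_zero.1 h).resolve_left hα0.ne')
  have ht : ∀ k, α * lam k ∈ Set.Ioo (0 : ℝ) 1 := fun k => by
    have ⟨h0, h1⟩ := hlam k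
    exact ⟨by positivity, by rwa [lt_div_iff₀ hα0, mul_comm] at h1⟩
  set τ := ⨅ j : ℕ, (1 - α * lam j) * lam j / α
  have hτ : ∀ k, α ^ 2 * τ ≤ α * lam k * (1 - α * lam k) := fun k => by
    have hle : τ ≤ (1 - α * lam k) * lam k / α :=
      ciInf_le ⟨0, by
        rintro _ ⟨j, rfl⟩
        exact div_nonneg (mul_nonneg (sub_nonneg.2 (ht j).2.le) (hlam j).1.le) hα0.le⟩ k
    calc α ^ 2 * τ ≤ α ^ 2 * ((1 - α * lam k) * lam k / α) := by gcongr
      _ = α * lam k * (1 - α * lam k) := by field_simp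
  intro k
  have hrate := hU.isSymmetric.km_rate (z := z) hQ hN hNfix ht (by positivity) hτ
    (fun k => by rw [hrec, hTN]; module) k
  have hsmul : ⟪U (α • (N (z k) - z k)), α • (N (z k) - z k)⟫ =
      α ^ 2 * ⟪U (N (z k) - z k), N (z k) - z k⟫ :=
    inner_map_smul_self (U := (U : H →ₗ[ℝ] H)) _ _
  simp only [ContinuousLinearMap.coe_coe] at hrate
  rw [le_div_iff₀ (by positivity), hres, hsmul]
  linarith
end

section
/- (Ergodic FPR bound for PRS) Let T be nonexpansive in ‖·‖_U with fixed point z*, λ_i ∈ (0,2], γ > 0, and define z^{i+1} = (1−λ_i/2)z^i + (λ_i/2)Tz^i, with points x_f^i, x_g^i satisfying λ_i(x_f^i − x_g^i) = z^{i+1} − z^i. Set Σ_k = ∑_{i=0}^k γλ_i and the ergodic averages x̄_f^k = (1/Σ_k)∑_{i=0}^k γλ_i x_f^i, x̄_g^k = (1/Σ_k)∑_{i=0}^k γλ_i x_g^i. Then ‖x̄_f^k − x̄_g^k‖_U ≤ 2γ‖z^0 − z*‖_U / Σ_k. -/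
/-!
The weighted differences `γλ_i (x_f^i - x_g^i) = γ (z^{i+1} - z^i)` telescope, so the two ergodic
averages differ by `(γ / Σ_k) (z^{k+1} - z^0)`. Since `T` is nonexpansive and fixes `z*`, both `z^i`
and `T z^i` lie in the closed `‖·‖_U`-ball around `z*` through `z^i`; this ball is convex, so it
contains `z^{i+1}`. Hence the iteration is Fejér monotone and
`‖z^{k+1} - z^0‖_U ≤ ‖z^{k+1} - z*‖_U + ‖z^0 - z*‖_U ≤ 2 ‖z^0 - z*‖_U`.
-/

open RealInnerProductSpace

/-- The seminorm `x ↦ √(re ⟪x, x⟫)`; the induced normed structure stays local, so that it cannot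
clash with a norm that `F` already carries. -/
noncomputable def PreInnerProductSpace.Core.seminorm {𝕜 F : Type*} [RCLike 𝕜] [AddCommGroup F]
    [Module 𝕜 F] (c : PreInnerProductSpace.Core 𝕜 F) : Seminorm 𝕜 F :=
  letI := InnerProductSpace.Core.toSeminormedAddCommGroup (c := c)
  letI := InnerProductSpace.Core.toNormedSpace (c := c)
  normSeminorm 𝕜 F

namespace ContinuousLinearMap.IsPositive

variable {E : Type*} [NormedAddCommGroup E] [InnerProductSpace ℝ E] {U : E →L[ℝ] E}

abbrev preInnerProductSpaceCore (hU : U.IsPositive) : PreInnerProductSpace.Core ℝ E where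
  inner x y := ⟪U x, y⟫
  conj_inner_symm x y := (hU.inner_left_eq_inner_right y x).trans (real_inner_comm _ _)
  re_inner_nonneg := hU.inner_nonneg_left
  add_left x y z := by simp only [map_add, inner_add_left]
  smul_left x y r := by simp only [map_smul, real_inner_smul_left, conj_trivial]

noncomputable def seminorm (hU : U.IsPositive) : Seminorm ℝ E :=
  hU.preInnerProductSpaceCore.seminorm

theorem seminorm_apply (hU : U.IsPositive) (x : E) : hU.seminorm x = √⟪U x, x⟫ := rfl

end ContinuousLinearMap.IsPositive

namespace Seminorm

variable {E : Type*} [AddCommGroup E] [Module ℝ E] (p : Seminorm ℝ E)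

theorem antitone_sub_of_averaged_iterate {T : E → E} {y : E}
    (hT : ∀ x, p (T x - y) ≤ p (x - y)) {t : ℕ → ℝ} (ht : ∀ i, t i ∈ Set.Icc (0 : ℝ) 1)
    {z : ℕ → E} (hz : ∀ i, z (i + 1) = (1 - t i) • z i + t i • T (z i)) :
    Antitone fun k => p (z k - y) := by
  refine antitone_nat_of_succ_le fun i => ?_
  have hball := p.convex_closedBall y (p (z i - y))
    (p.mem_closedBall.2 le_rfl) (p.mem_closedBall.2 (hT (z i)))
    (sub_nonneg.2 (ht i).2) (ht i).1 (sub_add_cancel 1 (t i))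
  rw [← hz i] at hball
  exact p.mem_closedBall.1 hball

theorem sub_le_two_mul_of_antitone {z : ℕ → E} {y : E} (hz : Antitone fun k => p (z k - y))
    (n : ℕ) : p (z n - z 0) ≤ 2 * p (z 0 - y) :=
  calc p (z n - z 0) = p ((z n - y) - (z 0 - y)) := by rw [sub_sub_sub_cancel_right]
    _ ≤ p (z n - y) + p (z 0 - y) := map_sub_le_add p _ _
    _ ≤ 2 * p (z 0 - y) := by linarith [hz (Nat.zero_le n)]

end Seminorm

theorem sum_smul_sub_sum_smul_eq_smul_sub {E : Type*} [AddCommGroup E] [Module ℝ E]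
    {lam : ℕ → ℝ} {z x y : ℕ → E} (h : ∀ i, lam i • (x i - y i) = z (i + 1) - z i)
    (c : ℝ) (n : ℕ) :
    ∑ i ∈ Finset.range n, (c * lam i) • x i - ∑ i ∈ Finset.range n, (c * lam i) • y i =
      c • (z n - z 0) := by
  simp only [← Finset.sum_sub_distrib, ← smul_sub, mul_smul, h, ← Finset.smul_sum,
    Finset.sum_range_sub]

/-- Ergodic fixed-point-residual bound for relaxed PRS: the `U`-norm distance between the
ergodic averages of the two splitting variables is at most `2γ‖z^0 - z*‖_U / Σ_k`. -/
theorem ergodic_PRS_sequence_distance {H : Type*} [NormedAddCommGroup H]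
    [InnerProductSpace ℝ H] [CompleteSpace H]
    (ρ γ : ℝ) (hρ : 0 < ρ) (hγ : 0 < γ)
    (U : H →L[ℝ] H) (hU : IsSelfAdjoint U)
    (hstrong : ∀ x : H, ρ * ‖x‖ ^ 2 ≤ ⟪U x, x⟫)
    (T : H → H)
    (hT : ∀ x y : H, ⟪U (T x - T y), T x - T y⟫ ≤ ⟪U (x - y), x - y⟫)
    (zs : H) (hfix : T zs = zs)
    (lam : ℕ → ℝ) (hlam : ∀ i, lam i ∈ Set.Ioc (0 : ℝ) 2)
    (z xf xg : ℕ → H)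
    (hrec : ∀ i, z (i + 1) = (1 - lam i / 2) • z i + (lam i / 2) • T (z i))
    (hfpr : ∀ i, lam i • (xf i - xg i) = z (i + 1) - z i) :
    ∀ k : ℕ,
      Real.sqrt
          ⟪U ((∑ i ∈ Finset.range (k + 1), γ * lam i)⁻¹ •
                ∑ i ∈ Finset.range (k + 1), (γ * lam i) • xf i -
              (∑ i ∈ Finset.range (k + 1), γ * lam i)⁻¹ •
                ∑ i ∈ Finset.range (k + 1), (γ * lam i) • xg i),
            (∑ i ∈ Finset.range (k + 1), γ * lam i)⁻¹ •
                ∑ i ∈ Finset.range (k + 1), (γ * lam i) • xf i -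
              (∑ i ∈ Finset.range (k + 1), γ * lam i)⁻¹ •
                ∑ i ∈ Finset.range (k + 1), (γ * lam i) • xg i⟫ ≤
        2 * γ * Real.sqrt ⟪U (z 0 - zs), z 0 - zs⟫ /
          (∑ i ∈ Finset.range (k + 1), γ * lam i) := by
  intro k
  have hUpos : U.IsPositive := (U.isPositive_iff').2
    ⟨hU, fun x => (by positivity : 0 ≤ ρ * ‖x‖ ^ 2).trans (hstrong x)⟩
  set p := hUpos.seminorm
  have hfejer : Antitone fun k => p (z k - zs) :=
    p.antitone_sub_of_averaged_iterate
      (fun x => by simpa only [p, hUpos.seminorm_apply, hfix] using Real.sqrt_le_sqrt (hT x zs))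
      (fun i => ⟨by linarith [(hlam i).1], by linarith [(hlam i).2]⟩) hrec
  set S := ∑ i ∈ Finset.range (k + 1), γ * lam i
  have hS : 0 ≤ S := Finset.sum_nonneg fun i _ => (mul_pos hγ (hlam i).1).le
  rw [← smul_sub, sum_smul_sub_sum_smul_eq_smul_sub hfpr, smul_smul, ← hUpos.seminorm_apply,
    ← hUpos.seminorm_apply]
  calc p ((S⁻¹ * γ) • (z (k + 1) - z 0)) = S⁻¹ * γ * p (z (k + 1) - z 0) := by
        rw [map_smul_eq_mul, Real.norm_of_nonneg (by positivity)]
    _ ≤ S⁻¹ * γ * (2 * p (z 0 - zs)) := by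
        gcongr
        exact p.sub_le_two_mul_of_antitone hfejer _
    _ = 2 * γ * p (z 0 - zs) / S := by ring
end

section
/- (Strong monotonicity of the first metric class, level 1) Let H₀ and G be real Hilbert spaces, V₀ : H₀ → H₀ and V : G → G self-adjoint bounded with V₀ ⪰ μ₀I, V ⪰ μI (μ₀, μ > 0), B : H₀ → G bounded linear, and w ∈ ℝ with w²‖V^{−1/2} B V₀^{−1/2}‖² < 1. Define U_w(x, y) := (V₀x − wB*y, −wBx + Vy) on H₀ × G. Then U_w is self-adjoint and ⟨(x,y), U_w(x,y)⟩ ≥ (1/2)(1 − w²‖V^{−1/2}BV₀^{−1/2}‖²) min{μ₀, μ}(‖x‖² + ‖y‖²) for all (x,y). -/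
/-! Let `R₀ = V₀Q₀` and `R = VQ`: they are self-adjoint square roots of `V₀` and `V` with
`Q₀R₀ = 1` and `QR = 1`. Then `⟪Bx, y⟫ = ⟪(QBQ₀)(R₀x), Ry⟫`, so with `a = ‖R₀x‖`, `b = ‖Ry‖`
and `d = |w| ‖QBQ₀‖` the quadratic form of `U_w` is at least `a² + b² - 2dab`. Since
`(1 + d²)(a² + b²) - 4dab = (a - db)² + (da - b)²`, this is at least `(1 - d²)/2 · (a² + b²)`,
and `a² + b² = ⟪V₀x, x⟫ + ⟪Vy, y⟫ ≥ min μ₀ μ · (‖x‖² + ‖y‖²)`. -/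

open RealInnerProductSpace

theorem Commute.of_mul_mul_self_eq_one {M : Type*} [Monoid M] {a b : M}
    (h₁ : a * (b * b) = 1) (h₂ : b * b * a = 1) : Commute a b :=
  calc a * b = a * (b * b) * (b * a) := by rw [← mul_one (a * b), ← h₂]; simp only [mul_assoc]
    _ = b * a := by rw [h₁, one_mul]

theorem IsSelfAdjoint.exists_sqrt_of_mul_mul_self_eq_one {R : Type*} [Monoid R] [StarMul R]
    {a b : R} (ha : IsSelfAdjoint a) (hb : IsSelfAdjoint b)
    (h₁ : a * (b * b) = 1) (h₂ : b * b * a = 1) :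
    ∃ r, IsSelfAdjoint r ∧ r * r = a ∧ b * r = 1 := by
  have hab := Commute.of_mul_mul_self_eq_one h₁ h₂
  refine ⟨a * b, (ha.commute_iff hb).mp hab, ?_, ?_⟩
  · nth_rewrite 2 [hab.eq]
    rw [← mul_assoc, mul_assoc a b b, h₁, one_mul]
  · rw [hab.eq, ← mul_assoc, h₂]

section
variable {E F : Type*} [NormedAddCommGroup E] [InnerProductSpace ℝ E]
  [NormedAddCommGroup F] [InnerProductSpace ℝ F]

theorem IsSelfAdjoint.inner_mul_self_apply_self [CompleteSpace E] {R : E →L[ℝ] E}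
    (hR : IsSelfAdjoint R) (x : E) : ⟪(R * R) x, x⟫ = ‖R x‖ ^ 2 :=
  (hR.isSymmetric (R x) x).trans (real_inner_self_eq_norm_sq _)

theorem abs_inner_apply_le_opNorm_comp_mul [CompleteSpace F] (B : E →L[ℝ] F)
    {P₀ R₀ : E →L[ℝ] E} {P R : F →L[ℝ] F} (hP : IsSelfAdjoint P)
    (hR₀ : P₀ * R₀ = 1) (hR : P * R = 1) (x : E) (y : F) :
    |⟪B x, y⟫| ≤ ‖P ∘L B ∘L P₀‖ * ‖R₀ x‖ * ‖R y‖ := by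
  have hx : P₀ (R₀ x) = x := by rw [← mul_apply_eq_comp, hR₀, one_apply_eq_self]
  have hy : P (R y) = y := by rw [← mul_apply_eq_comp, hR, one_apply_eq_self]
  calc |⟪B x, y⟫| = |⟪(P ∘L B ∘L P₀) (R₀ x), R y⟫| := by
        rw [ContinuousLinearMap.comp_apply, ContinuousLinearMap.comp_apply, hx,
          show ⟪P (B x), R y⟫ = ⟪B x, P (R y)⟫ from hP.isSymmetric _ _, hy]
    _ ≤ ‖(P ∘L B ∘L P₀) (R₀ x)‖ * ‖R y‖ := abs_real_inner_le_norm _ _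
    _ ≤ ‖P ∘L B ∘L P₀‖ * ‖R₀ x‖ * ‖R y‖ := by gcongr; exact (P ∘L B ∘L P₀).le_opNorm _
end

theorem one_sub_sq_div_two_mul_add_sq_le {a b d t : ℝ} (ht : t ≤ d * (a * b)) :
    (1 - d ^ 2) / 2 * (a ^ 2 + b ^ 2) ≤ a ^ 2 + b ^ 2 - 2 * t := by
  nlinarith [sq_nonneg (a - d * b), sq_nonneg (d * a - b)]

section
variable {E F : Type*} [NormedAddCommGroup E] [InnerProductSpace ℝ E] [CompleteSpace E]
  [NormedAddCommGroup F] [InnerProductSpace ℝ F] [CompleteSpace F]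
  {V₀ : E →L[ℝ] E} {V : F →L[ℝ] F} (B : E →L[ℝ] F) (w : ℝ)

open ContinuousLinearMap

theorem coupled_inner_symm (hV₀ : IsSelfAdjoint V₀) (hV : IsSelfAdjoint V) (x : E) (y : F)
    (x' : E) (y' : F) :
    ⟪V₀ x - w • adjoint B y, x'⟫ + ⟪-(w • B x) + V y, y'⟫ =
      ⟪x, V₀ x' - w • adjoint B y'⟫ + ⟪y, -(w • B x') + V y'⟫ := by
  simp only [inner_sub_left, inner_sub_right, inner_add_left, inner_add_right, inner_neg_left,
    inner_neg_right, real_inner_smul_left, real_inner_smul_right, adjoint_inner_left,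
    adjoint_inner_right, show ⟪V₀ x, x'⟫ = ⟪x, V₀ x'⟫ from hV₀.isSymmetric _ _,
    show ⟪V y, y'⟫ = ⟪y, V y'⟫ from hV.isSymmetric _ _, real_inner_comm (B x')]
  ring

theorem coupled_inner_self_eq (x : E) (y : F) :
    ⟪x, V₀ x - w • adjoint B y⟫ + ⟪y, -(w • B x) + V y⟫ =
      ⟪V₀ x, x⟫ + ⟪V y, y⟫ - 2 * (w * ⟪B x, y⟫) := by
  rw [inner_sub_right, inner_add_right, inner_neg_right, real_inner_smul_right,
    real_inner_smul_right, adjoint_inner_right, real_inner_comm (V₀ x), real_inner_comm (V y),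
    real_inner_comm (B x)]
  ring

end

theorem first_metric_class_strongly_monotone_general
    {H₀ G : Type*} [NormedAddCommGroup H₀] [InnerProductSpace ℝ H₀] [CompleteSpace H₀]
    [NormedAddCommGroup G] [InnerProductSpace ℝ G] [CompleteSpace G]
    (μ₀ μ : ℝ)
    (V₀ : H₀ →L[ℝ] H₀) (hV₀ : IsSelfAdjoint V₀)
    (hV₀μ : ∀ x : H₀, μ₀ * ‖x‖ ^ 2 ≤ ⟪V₀ x, x⟫)
    (V : G →L[ℝ] G) (hV : IsSelfAdjoint V)
    (hVμ : ∀ y : G, μ * ‖y‖ ^ 2 ≤ ⟪V y, y⟫)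
    (B : H₀ →L[ℝ] G) (w : ℝ)
    -- `Q₀ = V₀^{-1/2}` and `Q = V^{-1/2}`: the inverses of the positive square roots
    (Q₀ : H₀ →L[ℝ] H₀) (hQ₀sa : IsSelfAdjoint Q₀)
    (hQ₀inv₁ : V₀ ∘L (Q₀ ∘L Q₀) = ContinuousLinearMap.id ℝ H₀)
    (hQ₀inv₂ : (Q₀ ∘L Q₀) ∘L V₀ = ContinuousLinearMap.id ℝ H₀)
    (Q : G →L[ℝ] G) (hQsa : IsSelfAdjoint Q)
    (hQinv₁ : V ∘L (Q ∘L Q) = ContinuousLinearMap.id ℝ G)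
    (hQinv₂ : (Q ∘L Q) ∘L V = ContinuousLinearMap.id ℝ G)
    (hw : w ^ 2 * ‖Q ∘L B ∘L Q₀‖ ^ 2 < 1) :
    -- self-adjointness of `U_w`, stated componentwise on `H₀ × G`
    (∀ x y x' y',
      ⟪V₀ x - w • (ContinuousLinearMap.adjoint B) y, x'⟫ +
        ⟪-(w • B x) + V y, y'⟫ =
      ⟪x, V₀ x' - w • (ContinuousLinearMap.adjoint B) y'⟫ +
        ⟪y, -(w • B x') + V y'⟫) ∧
    -- strong monotonicity of `U_w`
    (∀ x y,
      (1 / 2) * (1 - w ^ 2 * ‖Q ∘L B ∘L Q₀‖ ^ 2) * min μ₀ μ * (‖x‖ ^ 2 + ‖y‖ ^ 2) ≤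
        ⟪x, V₀ x - w • (ContinuousLinearMap.adjoint B) y⟫ +
          ⟪y, -(w • B x) + V y⟫) := by
  refine ⟨coupled_inner_symm B w hV₀ hV, fun x y => ?_⟩
  obtain ⟨R₀, hR₀, rfl, hQ₀R₀⟩ := hV₀.exists_sqrt_of_mul_mul_self_eq_one hQ₀sa hQ₀inv₁ hQ₀inv₂
  obtain ⟨R, hR, rfl, hQR⟩ := hV.exists_sqrt_of_mul_mul_self_eq_one hQsa hQinv₁ hQinv₂
  set c := ‖Q ∘L B ∘L Q₀‖
  have hcross : w * ⟪B x, y⟫ ≤ |w| * c * (‖R₀ x‖ * ‖R y‖) :=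
    calc w * ⟪B x, y⟫ ≤ |w| * |⟪B x, y⟫| := by rw [← abs_mul]; exact le_abs_self _
      _ ≤ |w| * (c * ‖R₀ x‖ * ‖R y‖) := by
        gcongr; exact abs_inner_apply_le_opNorm_comp_mul B hQsa hQ₀R₀ hQR x y
      _ = |w| * c * (‖R₀ x‖ * ‖R y‖) := by ring
  have hcoercive : min μ₀ μ * (‖x‖ ^ 2 + ‖y‖ ^ 2) ≤ ‖R₀ x‖ ^ 2 + ‖R y‖ ^ 2 :=
    calc min μ₀ μ * (‖x‖ ^ 2 + ‖y‖ ^ 2) ≤ μ₀ * ‖x‖ ^ 2 + μ * ‖y‖ ^ 2 := by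
          rw [mul_add]; gcongr; exacts [min_le_left _ _, min_le_right _ _]
      _ ≤ ‖R₀ x‖ ^ 2 + ‖R y‖ ^ 2 := by
        rw [← hR₀.inner_mul_self_apply_self, ← hR.inner_mul_self_apply_self]
        exact add_le_add (hV₀μ x) (hVμ y)
  have hgap : 0 ≤ 1 - (|w| * c) ^ 2 := by rw [mul_pow, sq_abs]; linarith
  rw [coupled_inner_self_eq, hR₀.inner_mul_self_apply_self, hR.inner_mul_self_apply_self]
  calc 1 / 2 * (1 - w ^ 2 * c ^ 2) * min μ₀ μ * (‖x‖ ^ 2 + ‖y‖ ^ 2)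
      = (1 - (|w| * c) ^ 2) / 2 * (min μ₀ μ * (‖x‖ ^ 2 + ‖y‖ ^ 2)) := by
        rw [mul_pow, sq_abs]; ring
    _ ≤ (1 - (|w| * c) ^ 2) / 2 * (‖R₀ x‖ ^ 2 + ‖R y‖ ^ 2) := by gcongr
    _ ≤ _ := one_sub_sq_div_two_mul_add_sq_le hcross

/-- Strong monotonicity of the first metric class (level 1):
`U_w(x,y) = (V₀x - wB*y, -wBx + Vy)` is self-adjoint and strongly monotone whenever
`w²‖V^{-1/2} B V₀^{-1/2}‖² < 1`. -/
theorem first_metric_class_strongly_monotone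
    {H₀ G : Type*} [NormedAddCommGroup H₀] [InnerProductSpace ℝ H₀] [CompleteSpace H₀]
    [NormedAddCommGroup G] [InnerProductSpace ℝ G] [CompleteSpace G]
    (μ₀ μ : ℝ) (hμ₀ : 0 < μ₀) (hμ : 0 < μ)
    (V₀ : H₀ →L[ℝ] H₀) (hV₀ : IsSelfAdjoint V₀)
    (hV₀μ : ∀ x : H₀, μ₀ * ‖x‖ ^ 2 ≤ ⟪V₀ x, x⟫)
    (V : G →L[ℝ] G) (hV : IsSelfAdjoint V)
    (hVμ : ∀ y : G, μ * ‖y‖ ^ 2 ≤ ⟪V y, y⟫)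
    (B : H₀ →L[ℝ] G) (w : ℝ)
    -- `Q₀ = V₀^{-1/2}` and `Q = V^{-1/2}`: the inverses of the positive square roots
    (Q₀ : H₀ →L[ℝ] H₀) (hQ₀sa : IsSelfAdjoint Q₀) (hQ₀pos : ∀ x : H₀, 0 ≤ ⟪Q₀ x, x⟫)
    (hQ₀inv₁ : V₀ ∘L (Q₀ ∘L Q₀) = ContinuousLinearMap.id ℝ H₀)
    (hQ₀inv₂ : (Q₀ ∘L Q₀) ∘L V₀ = ContinuousLinearMap.id ℝ H₀)
    (Q : G →L[ℝ] G) (hQsa : IsSelfAdjoint Q) (hQpos : ∀ y : G, 0 ≤ ⟪Q y, y⟫)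
    (hQinv₁ : V ∘L (Q ∘L Q) = ContinuousLinearMap.id ℝ G)
    (hQinv₂ : (Q ∘L Q) ∘L V = ContinuousLinearMap.id ℝ G)
    (hw : w ^ 2 * ‖Q ∘L B ∘L Q₀‖ ^ 2 < 1) :
    -- self-adjointness of `U_w`, stated componentwise on `H₀ × G`
    (∀ x y x' y',
      ⟪V₀ x - w • (ContinuousLinearMap.adjoint B) y, x'⟫ +
        ⟪-(w • B x) + V y, y'⟫ =
      ⟪x, V₀ x' - w • (ContinuousLinearMap.adjoint B) y'⟫ +
        ⟪y, -(w • B x') + V y'⟫) ∧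
    -- strong monotonicity of `U_w`
    (∀ x y,
      (1 / 2) * (1 - w ^ 2 * ‖Q ∘L B ∘L Q₀‖ ^ 2) * min μ₀ μ * (‖x‖ ^ 2 + ‖y‖ ^ 2) ≤
        ⟪x, V₀ x - w • (ContinuousLinearMap.adjoint B) y⟫ +
          ⟪y, -(w • B x) + V y⟫) :=
  first_metric_class_strongly_monotone_general μ₀ μ V₀ hV₀ hV₀μ V hV hVμ B w Q₀ hQ₀sa hQ₀inv₁
    hQ₀inv₂ Q hQsa hQinv₁ hQinv₂ hw
end

section
/- (Strong monotonicity of the second metric class) Let V₀ ⪰ μ₀I on H₀ and V ⪰ μI on G be self-adjoint bounded (μ₀, μ > 0), B : H₀ → G bounded linear, and w ∈ ℝ with w²‖V^{−1/2}BV₀^{−1/2}‖² < 1. Define U_w(x,y) := (V₀x, (V − w²BV₀⁻¹B*)y). Then U_w is self-adjoint and ⟨(x,y), U_w(x,y)⟩ ≥ min{μ₀, (1 − w²‖V^{−1/2}BV₀^{−1/2}‖²)μ}(‖x‖² + ‖y‖²). -/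
open RealInnerProductSpace ContinuousLinearMap

/-! With `W₀ = Q₀²` (a left and a right inverse of `V₀` agree), the cross term is
`⟪y, B W₀ B* y⟫ = ‖(B Q₀)* y‖²`. Since `y = Q (Q V y)`, we have `(B Q₀)* y = (Q B Q₀)* (Q V y)`
and `‖Q V y‖² = ⟪V y, y⟫`, so the cross term is at most `‖Q B Q₀‖² ⟪V y, y⟫` and the second
block is at least `(1 - w² ‖Q B Q₀‖²) ⟪V y, y⟫ ≥ (1 - w² ‖Q B Q₀‖²) μ ‖y‖²`. -/

section
variable {E F : Type*} [NormedAddCommGroup E] [InnerProductSpace ℝ E] [CompleteSpace E]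
  [NormedAddCommGroup F] [InnerProductSpace ℝ F] [CompleteSpace F]

theorem IsSelfAdjoint.comp_self {Q : E →L[ℝ] E} (hQ : IsSelfAdjoint Q) :
    IsSelfAdjoint (Q ∘L Q) := by
  rw [isSelfAdjoint_iff', adjoint_comp, hQ.adjoint_eq]

theorem IsSelfAdjoint.inner_apply_apply_eq_norm_sq {Q : E →L[ℝ] E} (hQ : IsSelfAdjoint Q)
    (u : E) :
    ⟪u, Q (Q u)⟫ = ‖Q u‖ ^ 2 := by
  rw [← real_inner_self_eq_norm_sq]
  exact (hQ.isSymmetric u (Q u)).symm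

theorem IsSelfAdjoint.norm_apply_sq_eq_inner {Q V : F →L[ℝ] F} (hQ : IsSelfAdjoint Q)
    (hQV : (Q ∘L Q) ∘L V = ContinuousLinearMap.id ℝ F) (y : F) :
    ‖Q (V y)‖ ^ 2 = ⟪V y, y⟫ := by
  rw [← hQ.inner_apply_apply_eq_norm_sq]
  congr 1
  exact DFunLike.congr_fun hQV y

theorem IsSelfAdjoint.norm_adjoint_apply_sq_le {Q V : F →L[ℝ] F} (hQ : IsSelfAdjoint Q)
    (hQV : (Q ∘L Q) ∘L V = ContinuousLinearMap.id ℝ F) (C : E →L[ℝ] F) (y : F) :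
    ‖C.adjoint y‖ ^ 2 ≤ ‖Q ∘L C‖ ^ 2 * ⟪V y, y⟫ := by
  have hy : C.adjoint y = (Q ∘L C).adjoint (Q (V y)) := by
    rw [adjoint_comp, hQ.adjoint_eq, comp_apply]
    congr 1
    exact (DFunLike.congr_fun hQV y).symm
  calc ‖C.adjoint y‖ ^ 2 ≤ (‖Q ∘L C‖ * ‖Q (V y)‖) ^ 2 := by
        rw [hy, ← adjoint.norm_map (Q ∘L C)]
        exact pow_le_pow_left₀ (norm_nonneg _) (le_opNorm _ _) 2
    _ = ‖Q ∘L C‖ ^ 2 * ⟪V y, y⟫ := by rw [mul_pow, hQ.norm_apply_sq_eq_inner hQV]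

theorem mul_norm_sq_le_inner_sub_smul_conj {μ w : ℝ} {V Q : F →L[ℝ] F} {Q₀ : E →L[ℝ] E}
    (hVμ : ∀ y, μ * ‖y‖ ^ 2 ≤ ⟪V y, y⟫) (hQ : IsSelfAdjoint Q)
    (hQV : (Q ∘L Q) ∘L V = ContinuousLinearMap.id ℝ F) (hQ₀ : IsSelfAdjoint Q₀)
    (B : E →L[ℝ] F) (hw : w ^ 2 * ‖Q ∘L B ∘L Q₀‖ ^ 2 ≤ 1) (y : F) :
    (1 - w ^ 2 * ‖Q ∘L B ∘L Q₀‖ ^ 2) * μ * ‖y‖ ^ 2 ≤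
      ⟪y, V y - w ^ 2 • B ((Q₀ ∘L Q₀) (B.adjoint y))⟫ := by
  have hcross : ⟪y, B ((Q₀ ∘L Q₀) (B.adjoint y))⟫ = ‖(B ∘L Q₀).adjoint y‖ ^ 2 := by
    rw [← adjoint_inner_left, comp_apply, hQ₀.inner_apply_apply_eq_norm_sq, adjoint_comp,
      hQ₀.adjoint_eq, comp_apply]
  have hbound := hQ.norm_adjoint_apply_sq_le hQV (B ∘L Q₀) y
  rw [inner_sub_right, real_inner_smul_right, hcross, real_inner_comm]
  linarith [mul_le_mul_of_nonneg_left hbound (sq_nonneg w),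
    mul_le_mul_of_nonneg_left (hVμ y) (sub_nonneg.2 hw)]
end

theorem min_mul_add_le {m₀ m a b s t : ℝ} (ha : m₀ * s ≤ a) (hb : m * t ≤ b) (hs : 0 ≤ s)
    (ht : 0 ≤ t) : min m₀ m * (s + t) ≤ a + b := by
  rw [mul_add]
  exact add_le_add ((mul_le_mul_of_nonneg_right (min_le_left _ _) hs).trans ha)
    ((mul_le_mul_of_nonneg_right (min_le_right _ _) ht).trans hb)

theorem second_metric_class_strongly_monotone_general
    {H₀ G : Type*} [NormedAddCommGroup H₀] [InnerProductSpace ℝ H₀] [CompleteSpace H₀]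
    [NormedAddCommGroup G] [InnerProductSpace ℝ G] [CompleteSpace G]
    (μ₀ μ : ℝ)
    (V₀ : H₀ →L[ℝ] H₀) (hV₀ : IsSelfAdjoint V₀)
    (hV₀μ : ∀ x : H₀, μ₀ * ‖x‖ ^ 2 ≤ ⟪V₀ x, x⟫)
    (V : G →L[ℝ] G) (hV : IsSelfAdjoint V)
    (hVμ : ∀ y : G, μ * ‖y‖ ^ 2 ≤ ⟪V y, y⟫)
    (B : H₀ →L[ℝ] G) (w : ℝ)
    -- `W₀ = V₀⁻¹`
    (W₀ : H₀ →L[ℝ] H₀)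
    (hW₀inv₂ : W₀ ∘L V₀ = ContinuousLinearMap.id ℝ H₀)
    -- `Q₀ = V₀^{-1/2}` and `Q = V^{-1/2}`: the inverses of the positive square roots
    (Q₀ : H₀ →L[ℝ] H₀) (hQ₀sa : IsSelfAdjoint Q₀)
    (hQ₀inv₁ : V₀ ∘L (Q₀ ∘L Q₀) = ContinuousLinearMap.id ℝ H₀)
    (Q : G →L[ℝ] G) (hQsa : IsSelfAdjoint Q)
    (hQinv₂ : (Q ∘L Q) ∘L V = ContinuousLinearMap.id ℝ G)
    (hw : w ^ 2 * ‖Q ∘L B ∘L Q₀‖ ^ 2 < 1) :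
    -- self-adjointness of `U_w`, stated componentwise on `H₀ × G`
    (∀ x y x' y',
      ⟪V₀ x, x'⟫ + ⟪V y - w ^ 2 • B (W₀ (ContinuousLinearMap.adjoint B y)), y'⟫ =
      ⟪x, V₀ x'⟫ + ⟪y, V y' - w ^ 2 • B (W₀ (ContinuousLinearMap.adjoint B y'))⟫) ∧
    -- strong monotonicity of `U_w`
    (∀ x y,
      min μ₀ ((1 - w ^ 2 * ‖Q ∘L B ∘L Q₀‖ ^ 2) * μ) * (‖x‖ ^ 2 + ‖y‖ ^ 2) ≤
        ⟪x, V₀ x⟫ + ⟪y, V y - w ^ 2 • B (W₀ (ContinuousLinearMap.adjoint B y))⟫) := by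
  obtain rfl : W₀ = Q₀ ∘L Q₀ := left_inv_eq_right_inv (M := H₀ →L[ℝ] H₀) hW₀inv₂ hQ₀inv₁
  have hU : IsSelfAdjoint (V - w ^ 2 • (B ∘L (Q₀ ∘L Q₀) ∘L B.adjoint)) := by
    have hcross := hQ₀sa.comp_self.conj_adjoint B
    rw [isSelfAdjoint_iff'] at hcross ⊢
    simp only [map_sub, map_smul, hV.adjoint_eq, hcross]
  refine ⟨fun x y x' y' => ?_, fun x y => ?_⟩
  · exact congrArg₂ (· + ·) (hV₀.isSymmetric x x') (hU.isSymmetric y y')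
  · rw [real_inner_comm]
    exact min_mul_add_le (hV₀μ x)
      (mul_norm_sq_le_inner_sub_smul_conj hVμ hQsa hQinv₂ hQ₀sa B hw.le y)
      (sq_nonneg _) (sq_nonneg _)

/-- Strong monotonicity of the second metric class:
`U_w(x,y) = (V₀x, (V - w²BV₀⁻¹B*)y)` is self-adjoint and strongly monotone whenever
`w²‖V^{-1/2} B V₀^{-1/2}‖² < 1`. -/
theorem second_metric_class_strongly_monotone
    {H₀ G : Type*} [NormedAddCommGroup H₀] [InnerProductSpace ℝ H₀] [CompleteSpace H₀]
    [NormedAddCommGroup G] [InnerProductSpace ℝ G] [CompleteSpace G]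
    (μ₀ μ : ℝ) (hμ₀ : 0 < μ₀) (hμ : 0 < μ)
    (V₀ : H₀ →L[ℝ] H₀) (hV₀ : IsSelfAdjoint V₀)
    (hV₀μ : ∀ x : H₀, μ₀ * ‖x‖ ^ 2 ≤ ⟪V₀ x, x⟫)
    (V : G →L[ℝ] G) (hV : IsSelfAdjoint V)
    (hVμ : ∀ y : G, μ * ‖y‖ ^ 2 ≤ ⟪V y, y⟫)
    (B : H₀ →L[ℝ] G) (w : ℝ)
    -- `W₀ = V₀⁻¹`
    (W₀ : H₀ →L[ℝ] H₀)
    (hW₀inv₁ : V₀ ∘L W₀ = ContinuousLinearMap.id ℝ H₀)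
    (hW₀inv₂ : W₀ ∘L V₀ = ContinuousLinearMap.id ℝ H₀)
    -- `Q₀ = V₀^{-1/2}` and `Q = V^{-1/2}`: the inverses of the positive square roots
    (Q₀ : H₀ →L[ℝ] H₀) (hQ₀sa : IsSelfAdjoint Q₀) (hQ₀pos : ∀ x : H₀, 0 ≤ ⟪Q₀ x, x⟫)
    (hQ₀inv₁ : V₀ ∘L (Q₀ ∘L Q₀) = ContinuousLinearMap.id ℝ H₀)
    (hQ₀inv₂ : (Q₀ ∘L Q₀) ∘L V₀ = ContinuousLinearMap.id ℝ H₀)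
    (Q : G →L[ℝ] G) (hQsa : IsSelfAdjoint Q) (hQpos : ∀ y : G, 0 ≤ ⟪Q y, y⟫)
    (hQinv₁ : V ∘L (Q ∘L Q) = ContinuousLinearMap.id ℝ G)
    (hQinv₂ : (Q ∘L Q) ∘L V = ContinuousLinearMap.id ℝ G)
    (hw : w ^ 2 * ‖Q ∘L B ∘L Q₀‖ ^ 2 < 1) :
    -- self-adjointness of `U_w`, stated componentwise on `H₀ × G`
    (∀ x y x' y',
      ⟪V₀ x, x'⟫ + ⟪V y - w ^ 2 • B (W₀ (ContinuousLinearMap.adjoint B y)), y'⟫ =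
      ⟪x, V₀ x'⟫ + ⟪y, V y' - w ^ 2 • B (W₀ (ContinuousLinearMap.adjoint B y'))⟫) ∧
    -- strong monotonicity of `U_w`
    (∀ x y,
      min μ₀ ((1 - w ^ 2 * ‖Q ∘L B ∘L Q₀‖ ^ 2) * μ) * (‖x‖ ^ 2 + ‖y‖ ^ 2) ≤
        ⟪x, V₀ x⟫ + ⟪y, V y - w ^ 2 • B (W₀ (ContinuousLinearMap.adjoint B y))⟫) :=
  second_metric_class_strongly_monotone_general μ₀ μ V₀ hV₀ hV₀μ V hV hVμ B w W₀ hW₀inv₂ Q₀ hQ₀sa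
    hQ₀inv₁ Q hQsa hQinv₂ hw
end
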